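/- arXiv:1902.05432 — 10 statements merged into one kernel-verified Lean document; each statement's English description precedes it below -/
import Mathlib

section
/- Let f : 2^S → ℝ be z-indexable and let x be a mixed Hider strategy with one target. Then any search σ that searches the locations in non-increasing order of the index x_i/z_i (i.e. x_{σ(1)}/z_{σ(1)} ≥ x_{σ(2)}/z_{σ(2)} ≥ … ≥ x_{σ(n)}/z_{σ(n)}) maximizes the expected payoff: for every search τ, P(x,τ) ≤ P(x,σ). -/
/-- The set of the first `i+1` locations searched (positions `0,…,i`) under the search `σ`. -/
def searched {n : ℕ} (σ : Equiv.Perm (Fin n)) (i : Fin n) : Finset (Fin n) :=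
  (Finset.univ.filter (fun t : Fin n => t ≤ i)).image σ

/-- The expected payoff `P(x,σ) = Σ_i x_{σ(i)} f(S^σ_i)`. -/
def pay {n : ℕ} (f : Finset (Fin n) → ℝ) (x : Fin n → ℝ) (σ : Equiv.Perm (Fin n)) : ℝ :=
  ∑ i : Fin n, x (σ i) * f (searched σ i)

/-- `f` is `z`-indexable. -/
def ZIndexable {n : ℕ} (f : Finset (Fin n) → ℝ) (z : Fin n → ℝ) : Prop :=
  (∀ r : Fin n, 0 < z r) ∧
  (∀ A : Finset (Fin n), 0 < f A) ∧
  (∀ A B : Finset (Fin n), B ⊂ A → f A < f B) ∧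
  (∀ (A : Finset (Fin n)) (i j : Fin n), i ≠ j → i ∉ A → j ∉ A →
    (f (insert i (insert j A)) - f (insert j A)) /
      (f (insert j (insert i A)) - f (insert i A)) = z i / z j)

/-!
Interchange argument. If a search visits `i` and then `j` at consecutive positions, swapping
them changes only those two terms of the payoff, and by `z`-indexability the change is a
positive multiple of `x_j / z_j - x_i / z_i`. Bubble-sorting any search `τ` into `σ` uses only
swaps that undo an inversion of `σ⁻¹ * τ`; as `σ` is sorted by index, none of them decreases
the payoff.
-/

open Finset Equiv

section Order

variable {ι : Type*} [LinearOrder ι]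

theorem Equiv.swap_le_iff_of_covBy {a b i : ι} (hab : a ⋖ b) (hi : i ≠ a) (u : ι) :
    swap a b u ≤ i ↔ u ≤ i := by
  have hib : i < b → i ≤ a := hab.le_of_lt
  rw [swap_apply_def]; split_ifs <;> grind [hab.lt]

theorem Equiv.swap_lt_swap_of_covBy {a b s t : ι} (hab : a ⋖ b) (hst : s < t)
    (hne : (s, t) ≠ (a, b)) : swap a b s < swap a b t := by
  have hsb : s < b → s ≤ a := hab.le_of_lt
  have htb : t < b → t ≤ a := hab.le_of_lt
  rw [ne_eq, Prod.mk.injEq] at hne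
  rw [swap_apply_def, swap_apply_def]; split_ifs <;> grind [hab.lt]

theorem Equiv.Perm.eq_one_of_strictMono [WellFoundedLT ι] {g : Perm ι} (hg : StrictMono g) :
    g = 1 :=
  Equiv.ext <| congrFun <| (hg.range_inj strictMono_id).1 <| by simp [g.surjective.range_eq]

variable [Fintype ι] {κ : Type*} [LinearOrder κ]

def inversions (g : ι → κ) : Finset (ι × ι) := {p | p.1 < p.2 ∧ g p.2 < g p.1}

theorem card_inversions_comp_swap_lt {g : ι → κ} {a b : ι} (hab : a ⋖ b) (hg : g b < g a) :
    #(inversions (g ∘ swap a b)) < #(inversions g) := by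
  have hmem : (a, b) ∈ inversions g := by simp [inversions, hab.lt, hg]
  refine (card_le_card_of_injOn (Prod.map (swap a b) (swap a b)) ?_ ?_).trans_lt
    (card_erase_lt_of_mem hmem)
  · rintro ⟨s, t⟩ hp
    simp only [inversions, coe_filter, mem_univ, true_and, Set.mem_ofPred_eq,
      Function.comp_apply] at hp
    have hne : (s, t) ≠ (a, b) := by
      rintro ⟨⟩
      simp only [swap_apply_left, swap_apply_right] at hp
      exact hg.not_gt hp.2
    refine mem_erase.2 ⟨?_, ?_⟩
    · simp only [Prod.map_apply, ne_eq, Prod.mk.injEq, swap_apply_eq_iff, swap_apply_left,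
        swap_apply_right]
      rintro ⟨rfl, rfl⟩
      exact hab.lt.not_gt hp.1
    · simpa [inversions, swap_lt_swap_of_covBy hab hp.1 hne] using hp.2
  · rintro ⟨s, t⟩ - ⟨s', t'⟩ - h
    simpa using h

theorem Equiv.Perm.le_of_forall_le_mul_swap [LocallyFiniteOrder ι] {α : Type*} [Preorder α]
    {F : Perm ι → α} (σ : Perm ι)
    (hF : ∀ τ a b, a ⋖ b → σ⁻¹ (τ b) < σ⁻¹ (τ a) → F τ ≤ F (τ * swap a b)) (τ : Perm ι) :
    F τ ≤ F σ := by
  induction hN : #(inversions (σ⁻¹ * τ)) using Nat.strong_induction_on generalizing τ with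
  | _ N ih =>
  by_cases hsorted : StrictMono (σ⁻¹ * τ)
  · rw [inv_mul_eq_one.1 (eq_one_of_strictMono hsorted)]
  obtain ⟨a, b, hab, hba⟩ : ∃ a b, a ⋖ b ∧ (σ⁻¹ * τ) b < (σ⁻¹ * τ) a := by
    simp only [strictMono_iff_forall_covBy, not_forall, not_lt] at hsorted
    obtain ⟨a, b, hab, hle⟩ := hsorted
    exact ⟨a, b, hab, hle.lt_of_ne ((σ⁻¹ * τ).injective.ne hab.ne')⟩
  refine (hF τ a b hab hba).trans (ih _ ?_ _ rfl)
  exact hN ▸ card_inversions_comp_swap_lt hab hba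

end Order

theorem ZIndexable.exchange {n : ℕ} {f : Finset (Fin n) → ℝ} {z x : Fin n → ℝ}
    (hf : ZIndexable f z) {A : Finset (Fin n)} {i j : Fin n} (hij : i ≠ j) (hiA : i ∉ A)
    (hjA : j ∉ A) (hxz : x i / z i ≤ x j / z j) :
    x i * f (insert i A) + x j * f (insert j (insert i A)) ≤
      x j * f (insert j A) + x i * f (insert j (insert i A)) := by
  obtain ⟨hz, -, hanti, hratio⟩ := hf
  set B := insert j (insert i A)
  have hB : insert i (insert j A) = B := insert_comm i j A
  have hq : 0 < f (insert i A) - f B :=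
    sub_pos.2 (hanti _ _ (ssubset_insert (by simp [hij.symm, hjA])))
  have hpq : (f (insert j A) - f B) * z j = (f (insert i A) - f B) * z i := by
    have h := hratio A i j hij hiA hjA
    rw [hB, div_eq_div_iff (by linarith) (hz j).ne'] at h
    linarith
  have key : x i * (f (insert i A) - f B) ≤ x j * (f (insert j A) - f B) :=
    calc x i * (f (insert i A) - f B) = x i / z i * ((f (insert i A) - f B) * z i) := by
          field_simp [(hz i).ne']
      _ ≤ x j / z j * ((f (insert i A) - f B) * z i) :=
          mul_le_mul_of_nonneg_right hxz (mul_pos hq (hz i)).le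
      _ = x j * (f (insert j A) - f B) := by
          rw [← hpq]
          field_simp [(hz j).ne']
  linarith

section Searched

variable {n : ℕ}

theorem searched_eq_image_Iic (σ : Perm (Fin n)) (i : Fin n) :
    searched σ i = (Iic i).image σ := by
  rw [searched, filter_ge_eq_Iic]

theorem searched_eq_insert (σ : Perm (Fin n)) (i : Fin n) :
    searched σ i = insert (σ i) ((Iio i).image σ) := by
  rw [searched_eq_image_Iic, ← Iio_insert, image_insert]

theorem searched_of_covBy (σ : Perm (Fin n)) {a b : Fin n} (hab : a ⋖ b) :
    searched σ b = insert (σ b) (searched σ a) := by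
  have hIio : Iio b = Iic a := by ext; simp [hab.lt_iff_le_left]
  rw [searched_eq_insert, searched_eq_image_Iic, hIio]

theorem searched_mul_swap_of_ne (σ : Perm (Fin n)) {a b i : Fin n} (hab : a ⋖ b) (hi : i ≠ a) :
    searched (σ * swap a b) i = searched σ i := by
  rw [searched_eq_image_Iic, searched_eq_image_Iic, Perm.coe_mul, ← image_image]
  congr 1
  ext u
  simp only [mem_image, mem_Iic]
  refine ⟨?_, fun hu => ⟨swap a b u, (swap_le_iff_of_covBy hab hi _).2 hu, swap_apply_self _ _ _⟩⟩
  rintro ⟨v, hv, rfl⟩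
  exact (swap_le_iff_of_covBy hab hi v).2 hv

theorem searched_mul_swap_left (σ : Perm (Fin n)) {a b : Fin n} (hab : a ⋖ b) :
    searched (σ * swap a b) a = insert (σ b) ((Iio a).image σ) := by
  rw [searched_eq_insert, Perm.mul_apply, swap_apply_left]
  congr 1
  refine image_congr fun u hu => ?_
  have hu : u < a := mem_Iio.1 hu
  simp [swap_apply_of_ne_of_ne hu.ne (hu.trans hab.lt).ne]

theorem pay_le_pay_mul_swap {f : Finset (Fin n) → ℝ} {z x : Fin n → ℝ} (hf : ZIndexable f z)
    (τ : Perm (Fin n)) {a b : Fin n} (hab : a ⋖ b)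
    (hxz : x (τ a) / z (τ a) ≤ x (τ b) / z (τ b)) :
    pay f x τ ≤ pay f x (τ * swap a b) := by
  set A := (Iio a).image τ
  have haA : τ a ∉ A := by simp [A]
  have hbA : τ b ∉ A := by simp [A, hab.lt.le]
  have hoff : ∀ i ∉ ({a, b} : Finset (Fin n)),
      x ((τ * swap a b) i) * f (searched (τ * swap a b) i) = x (τ i) * f (searched τ i) := by
    intro i hi
    simp only [mem_insert, mem_singleton, not_or] at hi
    rw [searched_mul_swap_of_ne τ hab hi.1, Perm.mul_apply, swap_apply_of_ne_of_ne hi.1 hi.2]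
  have hdiff : pay f x (τ * swap a b) - pay f x τ =
      (x (τ b) * f (insert (τ b) A) + x (τ a) * f (insert (τ b) (insert (τ a) A))) -
      (x (τ a) * f (insert (τ a) A) + x (τ b) * f (insert (τ b) (insert (τ a) A))) := by
    rw [pay, pay, ← sum_sub_distrib,
      ← sum_subset (subset_univ {a, b}) fun i _ hi => sub_eq_zero.2 (hoff i hi), sum_pair hab.ne,
      searched_mul_swap_left τ hab, searched_mul_swap_of_ne τ hab hab.ne', searched_of_covBy τ hab,
      searched_eq_insert τ a]
    simp only [Perm.mul_apply, swap_apply_left, swap_apply_right]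
    ring
  linarith [hf.exchange (τ.injective.ne hab.ne) haA hbA hxz]

end Searched

theorem searching_in_nonincreasing_index_order_is_optimal_general
    {n : ℕ} (f : Finset (Fin n) → ℝ) (z : Fin n → ℝ) (x : Fin n → ℝ)
    (hf : ZIndexable f z)
    (σ : Equiv.Perm (Fin n))
    (hσ : ∀ s t : Fin n, s ≤ t → x (σ t) / z (σ t) ≤ x (σ s) / z (σ s)) :
    ∀ τ : Equiv.Perm (Fin n), pay f x τ ≤ pay f x σ :=
  Perm.le_of_forall_le_mul_swap σ fun τ _ _ hab hba =>
    pay_le_pay_mul_swap hf τ hab (by simpa using hσ _ _ hba.le)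

/-- any search in non-increasing order of the index `x_i/z_i`
maximizes the expected payoff. -/
theorem searching_in_nonincreasing_index_order_is_optimal
    {n : ℕ} (f : Finset (Fin n) → ℝ) (z : Fin n → ℝ) (x : Fin n → ℝ)
    (hf : ZIndexable f z)
    (hx : ∀ i, 0 ≤ x i) (hxsum : ∑ i, x i = 1)
    (σ : Equiv.Perm (Fin n))
    (hσ : ∀ s t : Fin n, s ≤ t → x (σ t) / z (σ t) ≤ x (σ s) / z (σ s)) :
    ∀ τ : Equiv.Perm (Fin n), pay f x τ ≤ pay f x σ :=
  searching_in_nonincreasing_index_order_is_optimal_general f z x hf σ hσ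
end

section
/- Let f : 2^S → ℝ be z-indexable, let x be a mixed Hider strategy with one target, and let σ be a search in which location j is searched in some position t and location i is searched in position t+1. Let σ' be the search obtained from σ by transposing i and j, and let A = S^σ_{t−1} be the set of locations searched before j. Then P(x,σ) − P(x,σ') = z_j · f_{A∪{j}}(i) · (x_i/z_i − x_j/z_j). In particular, since f_{A∪{j}}(i) < 0, if x_i/z_i > x_j/z_j then P(x,σ) < P(x,σ'). -/
open Finset

variable {n : ℕ}

def searchedBefore (σ : Equiv.Perm (Fin n)) (t : Fin n) : Finset (Fin n) :=
  (univ.filter (fun s : Fin n => s < t)).image σ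

theorem searched_eq_insert_searchedBefore (σ : Equiv.Perm (Fin n)) (t : Fin n) :
    searched σ t = insert (σ t) (searchedBefore σ t) := by
  have : univ.filter (fun s : Fin n => s ≤ t) =
      insert t (univ.filter (fun s : Fin n => s < t)) := by
    ext s
    simp [le_iff_lt_or_eq, or_comm]
  rw [searched, searchedBefore, this, image_insert]

theorem apply_notMem_searchedBefore {σ : Equiv.Perm (Fin n)} {t s : Fin n} (h : t ≤ s) :
    σ s ∉ searchedBefore σ t := by
  simp [searchedBefore, h]

theorem image_trans_filter_eq {α : Type*} [Fintype α] [DecidableEq α] (τ σ : Equiv.Perm α)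
    (p : α → Prop) [DecidablePred p] (hτ : ∀ v, p (τ v) ↔ p v) :
    (univ.filter p).image (τ.trans σ) = (univ.filter p).image σ := by
  ext u
  simp only [mem_image, mem_filter, mem_univ, true_and, Equiv.trans_apply]
  exact ⟨fun ⟨v, hv, hu⟩ => ⟨τ v, (hτ v).2 hv, hu⟩,
    fun ⟨v, hv, hu⟩ => ⟨τ.symm v, (hτ _).1 (by simpa using hv), by simpa using hu⟩⟩

section Adjacent

variable {t t' : Fin n}

theorem swap_lt_iff (ht : (t' : ℕ) = t + 1) (v : Fin n) : Equiv.swap t t' v < t ↔ v < t := by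
  rcases eq_or_ne v t with rfl | h₁
  · simp only [Equiv.swap_apply_left, Fin.lt_def]
    omega
  rcases eq_or_ne v t' with rfl | h₂
  · simp only [Equiv.swap_apply_right, Fin.lt_def]
    omega
  · rw [Equiv.swap_apply_of_ne_of_ne h₁ h₂]

theorem swap_le_iff_of_ne (ht : (t' : ℕ) = t + 1) {s : Fin n} (hs : s ≠ t) (v : Fin n) :
    Equiv.swap t t' v ≤ s ↔ v ≤ s := by
  have hs' : (s : ℕ) ≠ t := Fin.val_ne_of_ne hs
  rcases eq_or_ne v t with rfl | h₁
  · simp only [Equiv.swap_apply_left, Fin.le_def]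
    omega
  rcases eq_or_ne v t' with rfl | h₂
  · simp only [Equiv.swap_apply_right, Fin.le_def]
    omega
  · rw [Equiv.swap_apply_of_ne_of_ne h₁ h₂]

theorem searchedBefore_swap (ht : (t' : ℕ) = t + 1) (σ : Equiv.Perm (Fin n)) :
    searchedBefore ((Equiv.swap t t').trans σ) t = searchedBefore σ t :=
  image_trans_filter_eq _ _ _ (swap_lt_iff ht)

theorem searched_swap_of_ne (ht : (t' : ℕ) = t + 1) (σ : Equiv.Perm (Fin n)) {s : Fin n}
    (hs : s ≠ t) :
    searched ((Equiv.swap t t').trans σ) s = searched σ s :=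
  image_trans_filter_eq _ _ _ (swap_le_iff_of_ne ht hs)

theorem searchedBefore_eq_searched (ht : (t' : ℕ) = t + 1) (σ : Equiv.Perm (Fin n)) :
    searchedBefore σ t' = searched σ t := by
  rw [searchedBefore, searched]
  congr 1
  ext s
  simp only [mem_filter, mem_univ, true_and, Fin.lt_def, Fin.le_def, ht]
  omega

theorem pay_sub_pay_swap (ht : (t' : ℕ) = t + 1) (f : Finset (Fin n) → ℝ) (x : Fin n → ℝ)
    (σ : Equiv.Perm (Fin n)) :
    pay f x σ - pay f x ((Equiv.swap t t').trans σ) =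
      x (σ t') * (f (insert (σ t') (insert (σ t) (searchedBefore σ t)))
          - f (insert (σ t') (searchedBefore σ t)))
        - x (σ t) * (f (insert (σ t') (insert (σ t) (searchedBefore σ t)))
          - f (insert (σ t) (searchedBefore σ t))) := by
  have htt' : t ≠ t' := by
    intro h
    simp [h] at ht
  rw [pay, pay, ← sum_sub_distrib, Fintype.sum_eq_add t t' htt']
  · simp only [Equiv.trans_apply, Equiv.swap_apply_left, Equiv.swap_apply_right,
      searched_eq_insert_searchedBefore, searchedBefore_swap ht, searchedBefore_eq_searched ht]
    rw [insert_comm (σ t)]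
    ring
  · rintro s ⟨hst, hst'⟩
    rw [searched_swap_of_ne ht σ hst, Equiv.trans_apply, Equiv.swap_apply_of_ne_of_ne hst hst',
      sub_self]

end Adjacent

namespace ZIndexable

variable {f : Finset (Fin n) → ℝ} {z : Fin n → ℝ}

theorem marginal_neg (hf : ZIndexable f z) {B : Finset (Fin n)} {i : Fin n} (hi : i ∉ B) :
    f (insert i B) - f B < 0 :=
  sub_neg.2 (hf.2.2.1 _ _ (ssubset_insert hi))

theorem mul_marginal_comm (hf : ZIndexable f z) {A : Finset (Fin n)} {i j : Fin n} (hij : i ≠ j)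
    (hi : i ∉ A) (hj : j ∉ A) :
    z i * (f (insert i (insert j A)) - f (insert i A)) =
      z j * (f (insert i (insert j A)) - f (insert j A)) := by
  have hratio := hf.2.2.2 A i j hij hi hj
  rw [div_eq_div_iff (marginal_neg hf (by simp [hij.symm, hj])).ne (hf.1 j).ne',
    insert_comm j i A] at hratio
  linarith

end ZIndexable

/-- Here `j = σ t` is searched in position `t`, `i = σ t'` in the next position `t'`,
`σ'` transposes `i` and `j`, and `A` is the set of locations searched before `j`. -/
theorem interchange_formula_general
    {n : ℕ} (f : Finset (Fin n) → ℝ) (z : Fin n → ℝ) (x : Fin n → ℝ)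
    (hf : ZIndexable f z)
    (σ : Equiv.Perm (Fin n)) (t t' : Fin n) (ht : (t' : ℕ) = (t : ℕ) + 1) :
    pay f x σ - pay f x ((Equiv.swap t t').trans σ) =
      z (σ t) *
        (f (insert (σ t') (insert (σ t) ((Finset.univ.filter (fun s : Fin n => s < t)).image σ)))
          - f (insert (σ t) ((Finset.univ.filter (fun s : Fin n => s < t)).image σ))) *
        (x (σ t') / z (σ t') - x (σ t) / z (σ t)) ∧
    (x (σ t) / z (σ t) < x (σ t') / z (σ t') →
      pay f x σ < pay f x ((Equiv.swap t t').trans σ)) := by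
  have hlt : t < t' := by simp [Fin.lt_def, ht]
  have hij : σ t' ≠ σ t := σ.injective.ne hlt.ne'
  have hiA : σ t' ∉ searchedBefore σ t := apply_notMem_searchedBefore hlt.le
  have hjA : σ t ∉ searchedBefore σ t := apply_notMem_searchedBefore le_rfl
  have hmarg := hf.marginal_neg (i := σ t') (B := insert (σ t) (searchedBefore σ t))
    (by simp [hij, hiA])
  have hexchange := hf.mul_marginal_comm hij hiA hjA
  have hzi := (hf.1 (σ t')).ne'
  have hzj := (hf.1 (σ t)).ne'
  have hformula : pay f x σ - pay f x ((Equiv.swap t t').trans σ) =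
      z (σ t) * (f (insert (σ t') (insert (σ t) (searchedBefore σ t)))
          - f (insert (σ t) (searchedBefore σ t))) *
        (x (σ t') / z (σ t') - x (σ t) / z (σ t)) := by
    rw [pay_sub_pay_swap ht]
    field_simp
    linear_combination x (σ t') * hexchange
  refine ⟨hformula, fun hratio => sub_neg.1 ?_⟩
  rw [hformula]
  exact mul_neg_of_neg_of_pos (mul_neg_of_pos_of_neg (hf.1 _) hmarg) (sub_pos.2 hratio)

/-- the interchange argument.  Here `j = σ t` is searched in position `t`,
`i = σ t'` is searched in the next position `t'`, `σ'` transposes `i` and `j`, and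
`A` is the set of locations searched before `j`. -/
theorem interchange_formula
    {n : ℕ} (f : Finset (Fin n) → ℝ) (z : Fin n → ℝ) (x : Fin n → ℝ)
    (hf : ZIndexable f z)
    (hx : ∀ i, 0 ≤ x i) (hxsum : ∑ i, x i = 1)
    (σ : Equiv.Perm (Fin n)) (t t' : Fin n) (ht : (t' : ℕ) = (t : ℕ) + 1) :
    pay f x σ - pay f x ((Equiv.swap t t').trans σ) =
      z (σ t) *
        (f (insert (σ t') (insert (σ t) ((Finset.univ.filter (fun s : Fin n => s < t)).image σ)))
          - f (insert (σ t) ((Finset.univ.filter (fun s : Fin n => s < t)).image σ))) *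
        (x (σ t') / z (σ t') - x (σ t) / z (σ t)) ∧
    (x (σ t) / z (σ t) < x (σ t') / z (σ t') →
      pay f x σ < pay f x ((Equiv.swap t t').trans σ)) :=
  interchange_formula_general f z x hf σ t t' ht
end

section
/- Let p ∈ (0,1)^n and let x be a mixed Hider strategy with one target. Then any search σ that searches the locations in non-increasing order of the index x_i p_i/(1−p_i) maximizes the expected probability of rescue P(x,σ) = Σ_{i=1}^n x_{σ(i)} ∏_{j=1}^i p_{σ(j)} over all searches: for every search τ, P(x,τ) ≤ P(x,σ). -/
/-!
Reading a search as the list of pairs `(x_i, p_i)` in search order, its payoff obeys the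
recursion `V((x, p) :: l) = p (x + V l)`. Interchanging two adjacent locations `a` before `b`
changes the payoff by `p_a x_a (1 - p_b) - p_b x_b (1 - p_a)`, whose sign is that of
`idx a - idx b` for the index `idx = x p / (1 - p)`. Hence moving a location of maximal index
to the front never lowers the payoff, and induction on the length shows that every order is
dominated by an order of non-increasing index.
-/

/-- The probability of rescue in the search and rescue game:
`P(x,σ) = Σ_i x_{σ(i)} ∏_{j≤i} p_{σ(j)}`. -/
def rescueP {n : ℕ} (p x : Fin n → ℝ) (σ : Equiv.Perm (Fin n)) : ℝ :=
  ∑ i : Fin n, x (σ i) * ∏ j ∈ Finset.univ.filter (fun t : Fin n => t ≤ i), p (σ j)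

namespace Rescue

/-- Payoff of searching the locations `(x_i, p_i)` in list order. -/
def value : List (ℝ × ℝ) → ℝ
  | [] => 0
  | e :: l => e.2 * (e.1 + value l)

noncomputable def index (e : ℝ × ℝ) : ℝ := e.1 * e.2 / (1 - e.2)

lemma value_cons_le_cons (e : ℝ × ℝ) (he : 0 ≤ e.2) {l l' : List (ℝ × ℝ)}
    (h : value l ≤ value l') : value (e :: l) ≤ value (e :: l') := by
  simp only [value]
  gcongr

lemma value_swap_le (a b : ℝ × ℝ) (ha : a.2 < 1) (hb : b.2 < 1) (h : index a ≤ index b)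
    (l : List (ℝ × ℝ)) : value (a :: b :: l) ≤ value (b :: a :: l) := by
  have hcross : a.1 * a.2 * (1 - b.2) ≤ b.1 * b.2 * (1 - a.2) :=
    (div_le_div_iff₀ (by linarith) (by linarith)).mp h
  simp only [value]
  nlinarith

lemma value_append_cons_le (a : ℝ × ℝ) (ha : a.2 < 1) (l₂ : List (ℝ × ℝ)) :
    ∀ l₁ : List (ℝ × ℝ), (∀ b ∈ l₁, 0 ≤ b.2 ∧ b.2 < 1 ∧ index b ≤ index a) →
      value (l₁ ++ a :: l₂) ≤ value (a :: (l₁ ++ l₂))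
  | [], _ => le_rfl
  | b :: l₁, hl₁ => by
    obtain ⟨hb₀, hb₁, hba⟩ := hl₁ b List.mem_cons_self
    have ih := value_append_cons_le a ha l₂ l₁ fun c hc => hl₁ c (List.mem_cons_of_mem _ hc)
    calc value (b :: (l₁ ++ a :: l₂)) ≤ value (b :: a :: (l₁ ++ l₂)) :=
          value_cons_le_cons b hb₀ ih
      _ ≤ value (a :: b :: (l₁ ++ l₂)) := value_swap_le b a hb₁ ha hba _

theorem value_le_of_perm_of_pairwise :
    ∀ l m : List (ℝ × ℝ), m.Perm l → (∀ b ∈ l, 0 ≤ b.2 ∧ b.2 < 1) →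
      l.Pairwise (fun a b => index b ≤ index a) → value m ≤ value l
  | [], m, hperm, _, _ => by rw [List.perm_nil.mp hperm]
  | a :: t, m, hperm, hl, hsorted => by
    obtain ⟨l₁, l₂, rfl⟩ := List.append_of_mem (hperm.mem_iff.mpr List.mem_cons_self)
    have hfront : value (l₁ ++ a :: l₂) ≤ value (a :: (l₁ ++ l₂)) := by
      refine value_append_cons_le a (hl a List.mem_cons_self).2 l₂ l₁ fun b hb => ?_
      have hb' : b ∈ a :: t := hperm.subset (List.mem_append_left _ hb)
      refine ⟨(hl b hb').1, (hl b hb').2, ?_⟩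
      rcases List.mem_cons.mp hb' with rfl | hbt
      · exact le_rfl
      · exact (List.pairwise_cons.mp hsorted).1 b hbt
    have htail : value (l₁ ++ l₂) ≤ value t :=
      value_le_of_perm_of_pairwise t _ (List.perm_middle.symm.trans hperm).cons_inv
        (fun b hb => hl b (List.mem_cons_of_mem _ hb)) (List.pairwise_cons.mp hsorted).2
    exact hfront.trans (value_cons_le_cons a (hl a List.mem_cons_self).1 htail)

lemma value_ofFn {n : ℕ} (y q : Fin n → ℝ) :
    value (List.ofFn fun k => (y k, q k)) =
      ∑ i : Fin n, y i * ∏ j ∈ Finset.univ.filter (fun t : Fin n => t ≤ i), q j := by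
  induction n with
  | zero => simp [value]
  | succ n ih =>
    have hprod_zero : ∏ j ∈ Finset.univ.filter (fun t : Fin (n + 1) => t ≤ 0), q j = q 0 := by
      rw [Finset.prod_filter, Fin.prod_univ_succ]
      simp [Fin.succ_ne_zero]
    have hprod_succ (i : Fin n) :
        ∏ j ∈ Finset.univ.filter (fun t : Fin (n + 1) => t ≤ i.succ), q j =
          q 0 * ∏ j ∈ Finset.univ.filter (fun t : Fin n => t ≤ i), q j.succ := by
      rw [Finset.prod_filter, Fin.prod_univ_succ, Finset.prod_filter]
      simp [Fin.succ_le_succ_iff]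
    rw [List.ofFn_succ, value, ih, Fin.sum_univ_succ, hprod_zero, mul_add, Finset.mul_sum]
    simp only [hprod_succ]
    congr 1
    · ring
    · exact Finset.sum_congr rfl fun i _ => by ring

lemma rescueP_eq_value {n : ℕ} (p x : Fin n → ℝ) (σ : Equiv.Perm (Fin n)) :
    rescueP p x σ = value (List.ofFn ((fun i => (x i, p i)) ∘ σ)) :=
  (value_ofFn (x ∘ σ) (p ∘ σ)).symm

end Rescue

theorem rescue_index_optimal_general
    {n : ℕ} (p : Fin n → ℝ) (hp : ∀ i, 0 < p i ∧ p i < 1)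
    (x : Fin n → ℝ)
    (σ : Equiv.Perm (Fin n))
    (hσ : ∀ s t : Fin n, s ≤ t →
      x (σ t) * p (σ t) / (1 - p (σ t)) ≤ x (σ s) * p (σ s) / (1 - p (σ s))) :
    ∀ τ : Equiv.Perm (Fin n), rescueP p x τ ≤ rescueP p x σ := by
  intro τ
  set e : Fin n → ℝ × ℝ := fun i => (x i, p i)
  rw [Rescue.rescueP_eq_value, Rescue.rescueP_eq_value]
  refine Rescue.value_le_of_perm_of_pairwise _ _
    ((τ.ofFn_comp_perm e).trans (σ.ofFn_comp_perm e).symm) ?_ ?_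
  · simp only [List.mem_ofFn, forall_exists_index]
    rintro _ k rfl
    exact ⟨(hp (σ k)).1.le, (hp (σ k)).2⟩
  · exact List.pairwise_ofFn.mpr fun s t hst => hσ s t hst.le

/-- any search in non-increasing order of the index `x_i p_i/(1−p_i)`
maximizes the expected probability of rescue. -/
theorem rescue_index_optimal
    {n : ℕ} (p : Fin n → ℝ) (hp : ∀ i, 0 < p i ∧ p i < 1)
    (x : Fin n → ℝ) (hx : ∀ i, 0 ≤ x i) (hxsum : ∑ i, x i = 1)
    (σ : Equiv.Perm (Fin n))
    (hσ : ∀ s t : Fin n, s ≤ t →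
      x (σ t) * p (σ t) / (1 - p (σ t)) ≤ x (σ s) * p (σ s) / (1 - p (σ s))) :
    ∀ τ : Equiv.Perm (Fin n), rescueP p x τ ≤ rescueP p x σ :=
  rescue_index_optimal_general p hp x σ hσ
end

section
/- Let p ∈ (0,1)^n, let γ ∈ (0,1] be a discount factor, and let x be a mixed Hider strategy with one target. Then any search σ that searches the locations in non-increasing order of the index x_i p_i/(1−γ p_i) maximizes the discounted expected payoff P_γ(x,σ) = Σ_{i=1}^n x_{σ(i)} ∏_{j=1}^i (γ p_{σ(j)}) over all searches: for every search τ, P_γ(x,τ) ≤ P_γ(x,σ). -/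
/-- The discounted expected payoff of the search and rescue game with discount factor `γ`:
`P_γ(x,σ) = Σ_i x_{σ(i)} ∏_{j≤i} (γ p_{σ(j)})`. -/
def rescuePGamma {n : ℕ} (γ : ℝ) (p x : Fin n → ℝ) (σ : Equiv.Perm (Fin n)) : ℝ :=
  ∑ i : Fin n, x (σ i) * ∏ j ∈ Finset.univ.filter (fun t : Fin n => t ≤ i), (γ * p (σ j))

/-!
Searching `u` immediately before `v` instead of after changes the payoff by
`x_u q_u (1 - q_v) - x_v q_v (1 - q_u)` (with `q = γ p`), whatever is searched afterwards, and this
is nonnegative exactly when the index of `u` is at least that of `v`. Repeatedly bringing a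
location of largest index to the front therefore turns any search into the index order without
ever lowering the payoff.
-/

namespace SearchPayoff

variable {α : Type*} (q x : α → ℝ)

noncomputable def payoff : List α → ℝ
  | [] => 0
  | a :: l => q a * (x a + payoff l)

noncomputable def index (a : α) : ℝ := x a * q a / (1 - q a)

variable {q x}

theorem payoff_cons_cons_le_swap {u v : α} (hu : q u < 1) (hv : q v < 1)
    (h : index q x u ≤ index q x v) (l : List α) :
    payoff q x (u :: v :: l) ≤ payoff q x (v :: u :: l) := by
  rw [index, index, div_le_div_iff₀ (by linarith) (by linarith)] at h
  simp only [payoff]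
  linarith

theorem payoff_cons_le_cons {a : α} (ha : 0 ≤ q a) {l l' : List α}
    (h : payoff q x l ≤ payoff q x l') : payoff q x (a :: l) ≤ payoff q x (a :: l') := by
  simp only [payoff]
  gcongr

theorem payoff_append_cons_le_cons_append (hq₀ : ∀ a, 0 ≤ q a) (hq₁ : ∀ a, q a < 1)
    {b : α} (l₂ : List α) :
    ∀ l₁ : List α, (∀ a ∈ l₁, index q x a ≤ index q x b) →
      payoff q x (l₁ ++ b :: l₂) ≤ payoff q x (b :: (l₁ ++ l₂))
  | [], _ => le_rfl
  | a :: l₁, h => calc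
      payoff q x (a :: (l₁ ++ b :: l₂)) ≤ payoff q x (a :: b :: (l₁ ++ l₂)) :=
        payoff_cons_le_cons (hq₀ a) <| payoff_append_cons_le_cons_append hq₀ hq₁ l₂ l₁
          fun c hc => h c (List.mem_cons_of_mem _ hc)
      _ ≤ payoff q x (b :: a :: (l₁ ++ l₂)) :=
        payoff_cons_cons_le_swap (hq₁ a) (hq₁ b) (h a List.mem_cons_self) _

theorem payoff_le_of_perm_of_pairwise (hq₀ : ∀ a, 0 ≤ q a) (hq₁ : ∀ a, q a < 1) :
    ∀ {l m : List α}, l.Perm m → m.Pairwise (fun a b => index q x b ≤ index q x a) →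
      payoff q x l ≤ payoff q x m
  | l, [], hlm, _ => by rw [List.perm_nil.mp hlm]
  | l, b :: m, hlm, hm => by
    obtain ⟨hb, hm⟩ := List.pairwise_cons.mp hm
    obtain ⟨l₁, l₂, rfl⟩ := List.append_of_mem (hlm.mem_iff.mpr List.mem_cons_self)
    have hlm' : (b :: (l₁ ++ l₂)).Perm (b :: m) := List.perm_middle.symm.trans hlm
    have hb_max : ∀ a ∈ l₁, index q x a ≤ index q x b := fun a ha =>
      hb a <| hlm'.cons_inv.mem_iff.mp (List.mem_append_left _ ha)
    calc payoff q x (l₁ ++ b :: l₂) ≤ payoff q x (b :: (l₁ ++ l₂)) :=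
          payoff_append_cons_le_cons_append hq₀ hq₁ l₂ l₁ hb_max
      _ ≤ payoff q x (b :: m) :=
          payoff_cons_le_cons (hq₀ b) (payoff_le_of_perm_of_pairwise hq₀ hq₁ hlm'.cons_inv hm)

theorem payoff_ofFn {n : ℕ} (g : Fin n → α) :
    payoff q x (List.ofFn g) =
      ∑ i : Fin n, x (g i) * ∏ j ∈ Finset.univ.filter (fun t : Fin n => t ≤ i), q (g j) := by
  induction n with
  | zero => simp [payoff]
  | succ n ih =>
    have h_zero : ∏ j ∈ Finset.univ.filter (fun t : Fin (n + 1) => t ≤ 0), q (g j) = q (g 0) := by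
      rw [Finset.prod_filter, Fin.prod_univ_succ]
      simp [Fin.succ_ne_zero]
    have h_succ (i : Fin n) :
        ∏ j ∈ Finset.univ.filter (fun t : Fin (n + 1) => t ≤ i.succ), q (g j) =
          q (g 0) * ∏ j ∈ Finset.univ.filter (fun t : Fin n => t ≤ i), q (g j.succ) := by
      rw [Finset.prod_filter, Finset.prod_filter, Fin.prod_univ_succ]
      simp [Fin.succ_le_succ_iff]
    rw [List.ofFn_succ, payoff, ih, Fin.sum_univ_succ, h_zero]
    simp only [h_succ, mul_add, Finset.mul_sum]
    congr 1
    · ring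
    · exact Finset.sum_congr rfl fun i _ => by ring

end SearchPayoff

open SearchPayoff

theorem discounted_rescue_index_optimal_general
    {n : ℕ} (p : Fin n → ℝ) (hp : ∀ i, 0 < p i ∧ p i < 1)
    (γ : ℝ) (hγ : 0 < γ ∧ γ ≤ 1)
    (x : Fin n → ℝ)
    (σ : Equiv.Perm (Fin n))
    (hσ : ∀ s t : Fin n, s ≤ t →
      x (σ t) * p (σ t) / (1 - γ * p (σ t)) ≤ x (σ s) * p (σ s) / (1 - γ * p (σ s))) :
    ∀ τ : Equiv.Perm (Fin n), rescuePGamma γ p x τ ≤ rescuePGamma γ p x σ := by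
  intro τ
  set q : Fin n → ℝ := fun i => γ * p i
  have hq₀ (i : Fin n) : 0 ≤ q i := mul_nonneg hγ.1.le (hp i).1.le
  have hq₁ (i : Fin n) : q i < 1 := by nlinarith [hp i, hγ]
  have h_index (a : Fin n) : index q x a = γ * (x a * p a / (1 - γ * p a)) := by
    simp only [index, q]
    ring
  have hσ_sorted : (List.ofFn σ).Pairwise (fun a b => index q x b ≤ index q x a) := by
    rw [List.pairwise_ofFn]
    intro s t hst
    rw [h_index, h_index]
    exact mul_le_mul_of_nonneg_left (hσ s t hst.le) hγ.1.le
  have hτσ : (List.ofFn τ).Perm (List.ofFn σ) :=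
    (τ.ofFn_comp_perm id).trans (σ.ofFn_comp_perm id).symm
  have h := payoff_le_of_perm_of_pairwise hq₀ hq₁ hτσ hσ_sorted
  rwa [payoff_ofFn, payoff_ofFn] at h

/-- any search in non-increasing order of the index `x_i p_i/(1−γ p_i)`
maximizes the discounted expected payoff. -/
theorem discounted_rescue_index_optimal
    {n : ℕ} (p : Fin n → ℝ) (hp : ∀ i, 0 < p i ∧ p i < 1)
    (γ : ℝ) (hγ : 0 < γ ∧ γ ≤ 1)
    (x : Fin n → ℝ) (hx : ∀ i, 0 ≤ x i) (hxsum : ∑ i, x i = 1)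
    (σ : Equiv.Perm (Fin n))
    (hσ : ∀ s t : Fin n, s ≤ t →
      x (σ t) * p (σ t) / (1 - γ * p (σ t)) ≤ x (σ s) * p (σ s) / (1 - γ * p (σ s))) :
    ∀ τ : Equiv.Perm (Fin n), rescuePGamma γ p x τ ≤ rescuePGamma γ p x σ :=
  discounted_rescue_index_optimal_general p hp γ hγ x σ hσ
end

section
/- Let f : 2^S → ℝ be an arbitrary set function and let 1 ≤ k ≤ n−1. For any two k-element subsets A, B ∈ S^(k), the expected payoffs satisfy P_f(A, s_B) = P_f(B, s_A). -/
/-- The set of locations searched by the time all targets in `H` are found: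
`S^σ_i` where `i` is the last (hence, for nonempty `H`, the minimal `i` such that
`H ⊆ S^σ_i`) position occupied by an element of `H`. -/
def stopSet {n : ℕ} (σ : Equiv.Perm (Fin n)) (H : Finset (Fin n)) : Finset (Fin n) :=
  (Finset.univ.filter
    (fun t : Fin n => (t : ℕ) ≤ H.sup (fun h => ((σ.symm h : Fin n) : ℕ)))).image σ

/-- The payoff `P_f(H,σ) = f(S^σ_i)`, `i` minimal with `H ⊆ S^σ_i`. -/
def payoff {n : ℕ} (f : Finset (Fin n) → ℝ) (σ : Equiv.Perm (Fin n))
    (H : Finset (Fin n)) : ℝ :=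
  f (stopSet σ H)

/-- The searches whose first `k` locations are exactly the set `A`. -/
def startsWith {n : ℕ} (k : ℕ) (A : Finset (Fin n)) : Finset (Equiv.Perm (Fin n)) :=
  Finset.univ.filter
    (fun σ => (Finset.univ.filter (fun t : Fin n => (t : ℕ) < k)).image σ = A)

/-- `P_f(H, s_A)`: the expected payoff of the mixed strategy `s_A` (search `A` first, then
the rest in uniformly random order) against the Hider strategy `H`.  Since the payoff does
not depend on the order in which the first `k` locations are searched, this equals the
average payoff over all searches that search `A` first. -/
noncomputable def sPay {n : ℕ} (f : Finset (Fin n) → ℝ) (k : ℕ) (A H : Finset (Fin n)) : ℝ :=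
  (∑ σ ∈ startsWith k A, payoff f σ H) / (startsWith k A).card

/-- The swapping function: exchanges `A \ B` and `B \ A` via `e`, fixes everything else. -/
noncomputable def swapFun {n : ℕ} (A B : Finset (Fin n))
    (e : {x // x ∈ A \ B} ≃ {x // x ∈ B \ A}) (x : Fin n) : Fin n :=
  if h : x ∈ A \ B then (e ⟨x, h⟩ : Fin n)
  else if h' : x ∈ B \ A then (e.symm ⟨x, h'⟩ : Fin n)
  else x

lemma swapFun_involutive {n : ℕ} (A B : Finset (Fin n))
    (e : {x // x ∈ A \ B} ≃ {x // x ∈ B \ A}) :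
    Function.Involutive (swapFun A B e) := by
  intro x
  unfold swapFun
  by_cases h : x ∈ A \ B
  · rw [dif_pos h]
    have h1 : ((e ⟨x, h⟩ : {x // x ∈ B \ A}) : Fin n) ∈ B \ A := (e ⟨x, h⟩).2
    have h2 : ((e ⟨x, h⟩ : {x // x ∈ B \ A}) : Fin n) ∉ A \ B := fun hc =>
      (Finset.mem_sdiff.mp hc).2 (Finset.mem_sdiff.mp h1).1
    rw [dif_neg h2, dif_pos h1]
    simp
  · rw [dif_neg h]
    by_cases h' : x ∈ B \ A
    · rw [dif_pos h']
      have h1 : ((e.symm ⟨x, h'⟩ : {x // x ∈ A \ B}) : Fin n) ∈ A \ B := (e.symm ⟨x, h'⟩).2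
      rw [dif_pos h1]
      simp
    · rw [dif_neg h', dif_neg h, dif_neg h']

/-- Key lemma: if `π` is an involution swapping `A \ B` and `B \ A` and fixing the rest,
then `σ ↦ σ.trans π` maps `startsWith k B` to `startsWith k A` preserving payoffs. -/
lemma key {n k : ℕ} (f : Finset (Fin n) → ℝ) (A B : Finset (Fin n)) (π : Equiv.Perm (Fin n))
    (hπs : ∀ x, π.symm x = π x)
    (hAB : ∀ x, x ∈ A \ B → π x ∈ B \ A)
    (hBA : ∀ x, x ∈ B \ A → π x ∈ A \ B)
    (hfix : ∀ x, x ∉ A \ B → x ∉ B \ A → π x = x)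
    (σ : Equiv.Perm (Fin n)) (hσ : σ ∈ startsWith k B) :
    σ.trans π ∈ startsWith k A ∧ payoff f (σ.trans π) B = payoff f σ A := by
  classical
  have hinvπ : ∀ x, π (π x) = x := fun x => by
    rw [← hπs (π x)]; exact π.symm_apply_apply x
  have hσ' : (Finset.univ.filter (fun t : Fin n => (t : ℕ) < k)).image σ = B := by
    simpa [startsWith] using hσ
  have himg : ∀ x : Fin n, π x ∈ B ↔ x ∈ A := by
    intro x
    by_cases h1 : x ∈ A \ B
    · have h := hAB x h1
      simp only [Finset.mem_sdiff] at h h1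
      exact iff_of_true h.1 h1.1
    · by_cases h2 : x ∈ B \ A
      · have h := hBA x h2
        simp only [Finset.mem_sdiff] at h h2
        exact iff_of_false h.2 h2.2
      · rw [hfix x h1 h2]
        simp only [Finset.mem_sdiff, not_and, not_not] at h1 h2
        exact ⟨h2, h1⟩
  have hπB : B.image π = A := by
    ext y
    constructor
    · intro hy
      obtain ⟨x, hx, hxy⟩ := Finset.mem_image.mp hy
      have : x = π y := by rw [← hxy, hinvπ]
      rw [this] at hx
      exact (himg y).mp hx
    · intro hy
      exact Finset.mem_image.mpr ⟨π y, (himg y).mpr hy, hinvπ y⟩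
  have hmem : σ.trans π ∈ startsWith k A := by
    simp only [startsWith, Finset.mem_filter, Finset.mem_univ, true_and]
    rw [Equiv.coe_trans, ← Finset.image_image, hσ', hπB]
  refine ⟨hmem, ?_⟩
  -- the stopping indices agree
  have hsup : B.sup (fun h => (((σ.trans π).symm h : Fin n) : ℕ))
      = A.sup (fun h => ((σ.symm h : Fin n) : ℕ)) := by
    have h1 := Finset.sup_image B (⇑π) (fun h => ((σ.symm h : Fin n) : ℕ))
    rw [hπB] at h1
    rw [h1]
    refine Finset.sup_congr rfl (fun b _ => ?_)
    simp [Equiv.symm_trans_apply, hπs]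
  set T := stopSet σ A with hTdef
  have hAT : A ⊆ T := by
    intro a ha
    refine Finset.mem_image.mpr ⟨σ.symm a, ?_, σ.apply_symm_apply a⟩
    simp only [Finset.mem_filter, Finset.mem_univ, true_and]
    exact Finset.le_sup (f := fun h => ((σ.symm h : Fin n) : ℕ)) ha
  have hBT : ∀ x, x ∈ A \ B → B ⊆ T := by
    intro x hx b hb
    obtain ⟨hxA, hxB⟩ := Finset.mem_sdiff.mp hx
    have hk : k ≤ (σ.symm x : ℕ) := by
      by_contra hlt
      push_neg at hlt
      exact hxB (hσ' ▸ Finset.mem_image.mpr ⟨σ.symm x, by simp [hlt], σ.apply_symm_apply x⟩)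
    rw [← hσ'] at hb
    obtain ⟨t, ht, rfl⟩ := Finset.mem_image.mp hb
    simp only [Finset.mem_filter, Finset.mem_univ, true_and] at ht
    refine Finset.mem_image.mpr ⟨t, ?_, rfl⟩
    simp only [Finset.mem_filter, Finset.mem_univ, true_and]
    calc (t : ℕ) ≤ (σ.symm x : ℕ) := le_trans (le_of_lt ht) hk
      _ ≤ A.sup (fun h => ((σ.symm h : Fin n) : ℕ)) :=
        Finset.le_sup (f := fun h => ((σ.symm h : Fin n) : ℕ)) hxA
  have hTim : T.image π = T := by
    apply Finset.eq_of_subset_of_card_le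
    · intro y hy
      obtain ⟨x, hxT, rfl⟩ := Finset.mem_image.mp hy
      by_cases h1 : x ∈ A \ B
      · exact hBT x h1 (Finset.mem_sdiff.mp (hAB x h1)).1
      · by_cases h2 : x ∈ B \ A
        · exact hAT (Finset.mem_sdiff.mp (hBA x h2)).1
        · rw [hfix x h1 h2]; exact hxT
    · rw [Finset.card_image_of_injective _ π.injective]
  have hT : stopSet (σ.trans π) B = T.image π := by
    rw [hTdef]
    unfold stopSet
    rw [hsup, Finset.image_image]
    rfl
  show f _ = f _
  rw [hT, hTim]

/-- for any set function `f` and `A, B ∈ S^(k)`,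
`P_f(A, s_B) = P_f(B, s_A)`. -/
theorem sPay_symm
    {n k : ℕ} (hk1 : 1 ≤ k) (hk2 : k ≤ n - 1)
    (f : Finset (Fin n) → ℝ)
    (A B : Finset (Fin n)) (hA : A.card = k) (hB : B.card = k) :
    sPay f k B A = sPay f k A B := by
  classical
  have hcd : (A \ B).card = (B \ A).card := Finset.card_sdiff_comm (hA.trans hB.symm)
  set e := Finset.equivOfCardEq hcd with he
  set π : Equiv.Perm (Fin n) := Function.Involutive.toPerm _ (swapFun_involutive A B e)
    with hπ
  have hπs : ∀ x, π.symm x = π x := fun x => rfl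
  have hAB : ∀ x, x ∈ A \ B → π x ∈ B \ A := by
    intro x hx
    show swapFun A B e x ∈ B \ A
    rw [swapFun, dif_pos hx]
    exact (e ⟨x, hx⟩).2
  have hBA : ∀ x, x ∈ B \ A → π x ∈ A \ B := by
    intro x hx
    have hx' : x ∉ A \ B := fun hc => (Finset.mem_sdiff.mp hx).2 (Finset.mem_sdiff.mp hc).1
    show swapFun A B e x ∈ A \ B
    rw [swapFun, dif_neg hx', dif_pos hx]
    exact (e.symm ⟨x, hx⟩).2
  have hfix : ∀ x, x ∉ A \ B → x ∉ B \ A → π x = x := by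
    intro x h1 h2
    show swapFun A B e x = x
    rw [swapFun, dif_neg h1, dif_neg h2]
  have hinvπ : ∀ x, π (π x) = x := fun x => by
    rw [← hπs (π x)]; exact π.symm_apply_apply x
  have htrans : ∀ σ : Equiv.Perm (Fin n), (σ.trans π).trans π = σ :=
    fun σ => Equiv.ext fun x => hinvπ (σ x)
  have hB' := fun σ hσ => key (k := k) f A B π hπs hAB hBA hfix σ hσ
  have hA' := fun σ hσ => key (k := k) f B A π hπs hBA hAB (fun x h1 h2 => hfix x h2 h1) σ hσ
  have hsum : ∑ σ ∈ startsWith k B, payoff f σ A = ∑ σ ∈ startsWith k A, payoff f σ B := by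
    refine Finset.sum_nbij' (fun σ => σ.trans π) (fun σ => σ.trans π)
      (fun σ hσ => (hB' σ hσ).1) (fun σ hσ => (hA' σ hσ).1)
      (fun σ _ => htrans σ) (fun σ _ => htrans σ)
      (fun σ hσ => (hB' σ hσ).2.symm)
  have hcard : (startsWith k B).card = (startsWith k A).card :=
    Finset.card_nbij' (fun σ => σ.trans π) (fun σ => σ.trans π)
      (fun σ hσ => (hB' σ hσ).1) (fun σ hσ => (hA' σ hσ).1)
      (fun σ _ => htrans σ) (fun σ _ => htrans σ)
  unfold sPay
  rw [hsum, hcard]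
end

section
/- Let f : 2^S → ℝ be z-indexable and let 1 ≤ k ≤ n−1. Define the mixed Hider strategy q on S^(k) by q_A = (∏_{i∈A} z_i)/T_k(S). Then the expected payoff P_f(q,σ) = Σ_{A∈S^(k)} q_A P_f(A,σ) is the same for every search σ. -/
/-- `T_k(A) = Σ_{B ⊆ A, |B| = k} ∏_{i∈B} z_i`. -/
def T {n : ℕ} (z : Fin n → ℝ) (k : ℕ) (A : Finset (Fin n)) : ℝ :=
  ∑ B ∈ Finset.powersetCard k A, ∏ i ∈ B, z i

/-!
Multiply the expected payoff by `T_k(S)` and group the sets `A` by the location `x ∈ A` that the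
search finds last. If `P` is the set searched before `x`, the payoff is `f(P ∪ {x})` and the
weights of these sets add up to `z_x T_{k-1}(P)`. Exchanging two consecutive locations `a`, `b`
of the search changes only the terms of `a` and `b`; with `P` searched before both, their sum
is preserved by the Pascal rule `T_j(P ∪ {a}) = T_j(P) + z_a T_{j-1}(P)` together with the
indexability identity `z_b (f(P ∪ {a,b}) - f(P ∪ {b})) = z_a (f(P ∪ {a,b}) - f(P ∪ {a}))`.
Adjacent transpositions generate all searches.
-/

open Finset

theorem Finset.sum_powersetCard_succ_insert {α M : Type*} [DecidableEq α] [AddCommMonoid M]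
    {a : α} {s : Finset α} (ha : a ∉ s) (k : ℕ) (g : Finset α → M) :
    ∑ A ∈ powersetCard (k + 1) (insert a s), g A =
      ∑ A ∈ powersetCard (k + 1) s, g A + ∑ B ∈ powersetCard k s, g (insert a B) := by
  have avoids : ∀ B ∈ powersetCard k s, a ∉ B := fun B hB h => ha ((mem_powersetCard.1 hB).1 h)
  rw [powersetCard_succ_insert ha, sum_union, sum_image]
  · intro B hB C hC h
    rw [← erase_insert (avoids B hB), ← erase_insert (avoids C hC)]
    exact congrArg (erase · a) h
  · refine disjoint_left.2 fun A hA hA' => ?_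
    obtain ⟨B, -, rfl⟩ := mem_image.1 hA'
    exact ha ((mem_powersetCard.1 hA).1 (mem_insert_self a B))

theorem Finset.sum_powersetCard_succ_eq_sum_sum_insert {α β M : Type*} [DecidableEq α]
    [LinearOrder β] [AddCommMonoid M] {r : α → β} (hr : Function.Injective r) (s : Finset α)
    (k : ℕ) (g : Finset α → M) :
    ∑ A ∈ powersetCard (k + 1) s, g A =
      ∑ x ∈ s, ∑ B ∈ powersetCard k {y ∈ s | r y < r x}, g (insert x B) := by
  induction s using Finset.induction_on_max_value r with
  | empty => rw [powersetCard_eq_empty.2 (by simp), sum_empty, sum_empty]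
  | insert a s ha hmax ih =>
    have below_a : {y ∈ insert a s | r y < r a} = s := by
      ext y
      simp only [mem_filter, mem_insert]
      constructor
      · rintro ⟨rfl | hy, hlt⟩
        exacts [absurd hlt (lt_irrefl _), hy]
      · intro hy
        exact ⟨Or.inr hy, (hmax y hy).lt_of_ne (hr.ne fun h => ha (h ▸ hy))⟩
    have below_x : ∀ x ∈ s, {y ∈ insert a s | r y < r x} = {y ∈ s | r y < r x} := by
      intro x hx
      rw [filter_insert, if_neg (hmax x hx).not_gt]
    rw [sum_powersetCard_succ_insert ha, ih, sum_insert ha, below_a, add_comm]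
    exact congrArg (_ + ·) (sum_congr rfl fun x hx => by rw [below_x x hx]).symm

section SearchGame

variable {n : ℕ}

def searchPos (σ : Equiv.Perm (Fin n)) (y : Fin n) : ℕ := σ.symm y

theorem searchPos_injective (σ : Equiv.Perm (Fin n)) : Function.Injective (searchPos σ) :=
  fun _ _ h => σ.symm.injective (Fin.ext h)

theorem searchPos_swap_mul (σ : Equiv.Perm (Fin n)) (a b : Fin n) :
    searchPos (Equiv.swap a b * σ) = searchPos σ ∘ Equiv.swap a b := by
  funext y
  simp [searchPos, Equiv.Perm.mul_def]

theorem mem_stopSet {σ : Equiv.Perm (Fin n)} {H : Finset (Fin n)} {y : Fin n} :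
    y ∈ stopSet σ H ↔ searchPos σ y ≤ H.sup (searchPos σ) := by
  simp only [stopSet, searchPos, mem_image, mem_filter, mem_univ, true_and]
  constructor
  · rintro ⟨x, hx, rfl⟩
    rwa [Equiv.symm_apply_apply]
  · exact fun h => ⟨σ.symm y, h, σ.apply_symm_apply y⟩

def rankedBefore (r : Fin n → ℕ) (x : Fin n) : Finset (Fin n) := {y | r y < r x}

theorem notMem_rankedBefore_self (r : Fin n → ℕ) (x : Fin n) : x ∉ rankedBefore r x := by
  simp [rankedBefore]

theorem stopSet_insert_of_subset {σ : Equiv.Perm (Fin n)} {x : Fin n} {B : Finset (Fin n)}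
    (hB : B ⊆ rankedBefore (searchPos σ) x) :
    stopSet σ (insert x B) = insert x (rankedBefore (searchPos σ) x) := by
  have hsup : (insert x B).sup (searchPos σ) = searchPos σ x := by
    refine le_antisymm (Finset.sup_le fun y hy => ?_) (le_sup (mem_insert_self x B))
    rcases mem_insert.1 hy with rfl | hy
    · exact le_rfl
    · simpa [rankedBefore] using (mem_filter.1 (hB hy)).2.le
  ext y
  rw [mem_stopSet, hsup, mem_insert, rankedBefore, mem_filter, le_iff_eq_or_lt,
    (searchPos_injective σ).eq_iff]
  simp

theorem T_zero (z : Fin n → ℝ) (A : Finset (Fin n)) : T z 0 A = 1 := by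
  simp [T]

theorem T_succ_insert (z : Fin n → ℝ) (k : ℕ) {a : Fin n} {P : Finset (Fin n)} (ha : a ∉ P) :
    T z (k + 1) (insert a P) = T z (k + 1) P + z a * T z k P := by
  rw [T, sum_powersetCard_succ_insert ha, T, T, mul_sum]
  congr 1
  refine sum_congr rfl fun B hB => prod_insert fun h => ha ?_
  exact (mem_powersetCard.1 hB).1 h

theorem mul_T_insert_sub_mul_T_insert (z : Fin n → ℝ) (k : ℕ) {a b : Fin n}
    {P : Finset (Fin n)} (ha : a ∉ P) (hb : b ∉ P) :
    z b * T z k (insert a P) - z a * T z k (insert b P) = (z b - z a) * T z k P := by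
  cases k with
  | zero => simp only [T_zero]; ring
  | succ k => rw [T_succ_insert z k ha, T_succ_insert z k hb]; ring

theorem ZIndexable.exchange_s7 {f : Finset (Fin n) → ℝ} {z : Fin n → ℝ} (hf : ZIndexable f z)
    {a b : Fin n} {P : Finset (Fin n)} (hab : a ≠ b) (ha : a ∉ P) (hb : b ∉ P) :
    z b * (f (insert a (insert b P)) - f (insert b P)) =
      z a * (f (insert a (insert b P)) - f (insert a P)) := by
  obtain ⟨hz, -, hanti, hratio⟩ := hf
  have hgap : f (insert a (insert b P)) - f (insert a P) ≠ 0 := by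
    refine (sub_neg.2 (hanti _ _ ?_)).ne
    rw [insert_comm]
    exact ssubset_insert fun h => hab ((mem_insert.1 h).resolve_right hb).symm
  have := hratio P a b hab ha hb
  rw [insert_comm b a, div_eq_div_iff hgap (hz b).ne'] at this
  linear_combination this

/-- The expected payoff against `q`, multiplied by `T_k(S)`. -/
def weightedPayoff (f : Finset (Fin n) → ℝ) (z : Fin n → ℝ) (k : ℕ)
    (σ : Equiv.Perm (Fin n)) : ℝ :=
  ∑ A ∈ powersetCard k univ, (∏ i ∈ A, z i) * payoff f σ A

def rankedValue (f : Finset (Fin n) → ℝ) (z : Fin n → ℝ) (k : ℕ) (r : Fin n → ℕ) : ℝ :=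
  ∑ x, z x * T z k (rankedBefore r x) * f (insert x (rankedBefore r x))

theorem weightedPayoff_succ (f : Finset (Fin n) → ℝ) (z : Fin n → ℝ) (k : ℕ)
    (σ : Equiv.Perm (Fin n)) :
    weightedPayoff f z (k + 1) σ = rankedValue f z k (searchPos σ) := by
  rw [weightedPayoff, sum_powersetCard_succ_eq_sum_sum_insert (searchPos_injective σ)]
  refine sum_congr rfl fun x _ => ?_
  rw [T, mul_sum, sum_mul]
  refine sum_congr rfl fun B hB => ?_
  have hB : B ⊆ rankedBefore (searchPos σ) x := (mem_powersetCard.1 hB).1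
  rw [payoff, stopSet_insert_of_subset hB,
    prod_insert fun h => notMem_rankedBefore_self _ x (hB h)]

section AdjacentSwap

variable {r : Fin n → ℕ} {a b : Fin n}

theorem comp_swap_apply_eq_ite (hr : Function.Injective r) (y : Fin n) :
    (r ∘ Equiv.swap a b) y = if r y = r a then r b else if r y = r b then r a else r y := by
  simp only [Function.comp, Equiv.swap_apply_def, hr.eq_iff]
  split_ifs <;> rfl

theorem rankedBefore_of_adjacent (hr : Function.Injective r) (hab : r b = r a + 1) :
    rankedBefore r b = insert a (rankedBefore r a) := by
  ext y
  simp only [rankedBefore, mem_filter, mem_univ, true_and, mem_insert, ← hr.eq_iff]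
  omega

theorem rankedBefore_comp_swap_left (hr : Function.Injective r) (hab : r b = r a + 1) :
    rankedBefore (r ∘ Equiv.swap a b) a = insert b (rankedBefore r a) := by
  ext y
  simp only [rankedBefore, mem_filter, mem_univ, true_and, mem_insert, comp_swap_apply_eq_ite hr,
    ← hr.eq_iff]
  split_ifs <;> omega

theorem rankedBefore_comp_swap_right (hr : Function.Injective r) (hab : r b = r a + 1) :
    rankedBefore (r ∘ Equiv.swap a b) b = rankedBefore r a := by
  ext y
  simp only [rankedBefore, mem_filter, mem_univ, true_and, comp_swap_apply_eq_ite hr]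
  split_ifs <;> omega

theorem rankedBefore_comp_swap_of_ne (hr : Function.Injective r) (hab : r b = r a + 1)
    {x : Fin n} (hxa : x ≠ a) (hxb : x ≠ b) :
    rankedBefore (r ∘ Equiv.swap a b) x = rankedBefore r x := by
  have := hr.ne hxa
  have := hr.ne hxb
  ext y
  simp only [rankedBefore, mem_filter, mem_univ, true_and, comp_swap_apply_eq_ite hr]
  split_ifs <;> omega

theorem rankedValue_comp_swap (hr : Function.Injective r) (hab : r b = r a + 1)
    {f : Finset (Fin n) → ℝ} {z : Fin n → ℝ} (hf : ZIndexable f z) (k : ℕ) :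
    rankedValue f z k (r ∘ Equiv.swap a b) = rankedValue f z k r := by
  set P := rankedBefore r a
  have hne : a ≠ b := fun h => by rw [h] at hab; omega
  have haP : a ∉ P := notMem_rankedBefore_self r a
  have hbP : b ∉ P := by simp [P, rankedBefore, hab]
  have hb : b ∈ univ.erase a := mem_erase.2 ⟨hne.symm, mem_univ b⟩
  rw [rankedValue, rankedValue, ← add_sum_erase _ _ (mem_univ a), ← add_sum_erase _ _ hb,
    ← add_sum_erase _ _ (mem_univ a), ← add_sum_erase _ _ hb, ← add_assoc, ← add_assoc,
    rankedBefore_of_adjacent hr hab, rankedBefore_comp_swap_left hr hab,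
    rankedBefore_comp_swap_right hr hab, insert_comm b a]
  congr 1
  · linear_combination (-f (insert a (insert b P))) * mul_T_insert_sub_mul_T_insert z k haP hbP -
      T z k P * hf.exchange_s7 hne haP hbP
  · refine sum_congr rfl fun x hx => ?_
    rw [rankedBefore_comp_swap_of_ne hr hab (ne_of_mem_erase (mem_of_mem_erase hx))
      (ne_of_mem_erase hx)]

end AdjacentSwap

theorem weightedPayoff_mul_swap {f : Finset (Fin (n + 1)) → ℝ} {z : Fin (n + 1) → ℝ}
    (hf : ZIndexable f z) (k : ℕ) (σ : Equiv.Perm (Fin (n + 1))) (i : Fin n) :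
    weightedPayoff f z (k + 1) (σ * Equiv.swap i.castSucc i.succ) =
      weightedPayoff f z (k + 1) σ := by
  have hσ : σ * Equiv.swap i.castSucc i.succ = Equiv.swap (σ i.castSucc) (σ i.succ) * σ := by
    simp [Equiv.swap_mul_eq_mul_swap]
  have hadj : searchPos σ (σ i.succ) = searchPos σ (σ i.castSucc) + 1 := by
    simp [searchPos]
  rw [hσ, weightedPayoff_succ, weightedPayoff_succ, searchPos_swap_mul,
    rankedValue_comp_swap (searchPos_injective σ) hadj hf k]

theorem weightedPayoff_eq_weightedPayoff_one {f : Finset (Fin (n + 1)) → ℝ}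
    {z : Fin (n + 1) → ℝ} (hf : ZIndexable f z) (k : ℕ) (σ : Equiv.Perm (Fin (n + 1))) :
    weightedPayoff f z (k + 1) σ = weightedPayoff f z (k + 1) 1 := by
  induction σ using Submonoid.induction_of_closure_eq_top_right
    (Equiv.Perm.mclosure_swap_castSucc_succ n) with
  | one => rfl
  | mul_right σ _ hswap ih =>
    obtain ⟨i, rfl⟩ := hswap
    rw [weightedPayoff_mul_swap hf, ih]

end SearchGame

theorem hider_strategy_equalizing_general
    {n k : ℕ} (hk1 : 1 ≤ k)
    (f : Finset (Fin n) → ℝ) (z : Fin n → ℝ) (hf : ZIndexable f z) :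
    ∀ σ τ : Equiv.Perm (Fin n),
      ∑ A ∈ Finset.powersetCard k (Finset.univ : Finset (Fin n)),
        ((∏ i ∈ A, z i) / T z k Finset.univ) * payoff f σ A =
      ∑ A ∈ Finset.powersetCard k (Finset.univ : Finset (Fin n)),
        ((∏ i ∈ A, z i) / T z k Finset.univ) * payoff f τ A := by
  intro σ τ
  obtain ⟨k, rfl⟩ := Nat.exists_eq_add_of_le' hk1
  simp only [div_mul_eq_mul_div, ← sum_div]
  change weightedPayoff f z (k + 1) σ / _ = weightedPayoff f z (k + 1) τ / _
  cases n with
  | zero => rw [Subsingleton.elim σ τ]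
  | succ m => rw [weightedPayoff_eq_weightedPayoff_one hf k σ,
    weightedPayoff_eq_weightedPayoff_one hf k τ]

/-- against the Hider strategy `q` with `q_A = (∏_{i∈A} z_i)/T_k(S)`,
every search has the same expected payoff. -/
theorem hider_strategy_equalizing
    {n k : ℕ} (hk1 : 1 ≤ k) (hk2 : k ≤ n - 1)
    (f : Finset (Fin n) → ℝ) (z : Fin n → ℝ) (hf : ZIndexable f z) :
    ∀ σ τ : Equiv.Perm (Fin n),
      ∑ A ∈ Finset.powersetCard k (Finset.univ : Finset (Fin n)),
        ((∏ i ∈ A, z i) / T z k Finset.univ) * payoff f σ A =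
      ∑ A ∈ Finset.powersetCard k (Finset.univ : Finset (Fin n)),
        ((∏ i ∈ A, z i) / T z k Finset.univ) * payoff f τ A :=
  hider_strategy_equalizing_general hk1 f z hf
end

section
/- Let p ∈ (0,1)^n, let λ₁ = (Σ_{i=1}^n (1−p_i)/p_i)^{-1}, and define the mixed Hider strategy x by x_i = λ₁ (1−p_i)/p_i. Then for every search σ, the expected payoff satisfies Σ_{i=1}^n x_{σ(i)} ∏_{j=1}^i p_{σ(j)} = λ₁ (1 − ∏_{i=1}^n p_i). -/
/-!
Against `x_i = λ₁ (1 - p_i) / p_i`, the term of position `i` of a search is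
`λ₁ (1 - p_{σ i}) ∏_{j < i} p_{σ j}`, the probability that the search survives the first `i`
locations and is captured at the next one, scaled by `λ₁`. These capture probabilities telescope
to `1 - ∏ p`, whatever the order `σ`.
-/

open Finset

variable {ι : Type*} [Fintype ι] [LinearOrder ι] [LocallyFiniteOrderBot ι]

theorem Finset.sum_one_sub_mul_prod_Iio {R : Type*} [CommRing R] (q : ι → R) :
    ∑ i, (1 - q i) * ∏ j ∈ Iio i, q j = 1 - ∏ i, q i := by
  have h := prod_one_sub_ordered univ fun i => 1 - q i
  simp only [sub_sub_cancel, filter_gt_eq_Iio] at h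
  rw [h, sub_sub_cancel]

theorem Finset.sum_mul_one_sub_div_mul_prod_Iic {K : Type*} [Field K] (c : K) (q : ι → K)
    (hq : ∀ i, q i ≠ 0) :
    ∑ i, c * ((1 - q i) / q i) * ∏ j ∈ Iic i, q j = c * (1 - ∏ i, q i) := by
  have hterm : ∀ i, c * ((1 - q i) / q i) * ∏ j ∈ Iic i, q j
      = c * ((1 - q i) * ∏ j ∈ Iio i, q j) := fun i => by
    rw [← mul_prod_Iio_eq_prod_Iic]
    field_simp [hq i]
  simp only [hterm, ← mul_sum, sum_one_sub_mul_prod_Iio]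

/-- against the Hider strategy `x_i = λ₁(1−p_i)/p_i`, every search has
expected payoff `λ₁(1 − ∏_i p_i)`, where `λ₁ = (Σ_i (1−p_i)/p_i)⁻¹`. -/
theorem equalizing_hider_value
    {n : ℕ} (p : Fin n → ℝ) (hp : ∀ i, 0 < p i ∧ p i < 1)
    (σ : Equiv.Perm (Fin n)) :
    ∑ i : Fin n,
        ((∑ r : Fin n, (1 - p r) / p r)⁻¹ * ((1 - p (σ i)) / p (σ i))) *
          ∏ j ∈ Finset.univ.filter (fun t : Fin n => t ≤ i), p (σ j) =
      (∑ r : Fin n, (1 - p r) / p r)⁻¹ * (1 - ∏ i : Fin n, p i) := by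
  simp only [filter_ge_eq_Iic]
  rw [sum_mul_one_sub_div_mul_prod_Iic _ (fun i => p (σ i)) fun i => (hp (σ i)).1.ne',
    Equiv.prod_comp σ p]
end

section
/- For every rooted tree G (with vertex probabilities as specified), the recursively defined value satisfies π(G) ≤ V_G ≤ 1. -/
/-- A rooted tree with vertex probabilities: a single vertex, a root with one branch,
or a root with two branches. -/
inductive RTree : Type
  | leaf (p : ℝ) : RTree
  | node1 (p : ℝ) (G' : RTree) : RTree
  | node2 (p : ℝ) (G₁ G₂ : RTree) : RTree

namespace RTree

/-- Validity of the probabilities: every leaf has probability in `(0,1)`, and every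
internal vertex (including the root) has probability in `(0,1]`. -/
def valid : RTree → Prop
  | leaf p => 0 < p ∧ p < 1
  | node1 p G' => (0 < p ∧ p ≤ 1) ∧ valid G'
  | node2 p G₁ G₂ => (0 < p ∧ p ≤ 1) ∧ valid G₁ ∧ valid G₂

/-- `π(G)`, the product of the probabilities of all vertices of `G`. -/
def piT : RTree → ℝ
  | leaf p => p
  | node1 p G' => p * piT G'
  | node2 p G₁ G₂ => p * (piT G₁ * piT G₂)

/-- The recursively defined value `V_G` of the game on `G`. -/
noncomputable def valT : RTree → ℝ
  | leaf p => p
  | node1 p G' => p * valT G'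
  | node2 p G₁ G₂ =>
      p * (((1 - piT G₁) / valT G₁ + (1 - piT G₂) / valT G₂)⁻¹) * (1 - piT G₁ * piT G₂)

/-- The normalizing factor `λ` for a branch vertex with branches `G₁` and `G₂`. -/
noncomputable def lamT (G₁ G₂ : RTree) : ℝ :=
  ((1 - piT G₁) / valT G₁ + (1 - piT G₂) / valT G₂)⁻¹


/-- Vertices of a rooted tree, as addresses: the root is `[]`, and the address of a
vertex in a branch is the branch direction (`false` for the first/unique branch,
`true` for the second) followed by its address within the branch. -/
def verts : RTree → List (List Bool)
  | leaf _ => [[]]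
  | node1 _ G' => [] :: (verts G').map (List.cons false)
  | node2 _ G₁ G₂ => [] :: ((verts G₁).map (List.cons false) ++ (verts G₂).map (List.cons true))

/-- The success probability of the vertex at a given address. -/
def pAt : RTree → List Bool → ℝ
  | leaf p, _ => p
  | node1 p _, [] => p
  | node1 _ G', _ :: l => pAt G' l
  | node2 p _ _, [] => p
  | node2 _ G₁ _, false :: l => pAt G₁ l
  | node2 _ _ G₂, true :: l => pAt G₂ l

/-- The subtree `G(v)` rooted at the vertex with address `v` (if it exists). -/
def sub? : RTree → List Bool → Option RTree
  | t, [] => some t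
  | leaf _, _ :: _ => none
  | node1 _ G', false :: l => sub? G' l
  | node1 _ _, true :: _ => none
  | node2 _ G₁ _, false :: l => sub? G₁ l
  | node2 _ _ G₂, true :: l => sub? G₂ l

/-- The tree hiding strategy `h_G`, as a function assigning probabilities to addresses. -/
noncomputable def hide : RTree → List Bool → ℝ
  | leaf _, [] => 1
  | leaf _, _ :: _ => 0
  | node1 _ _, [] => 0
  | node1 _ G', false :: l => hide G' l
  | node1 _ _, true :: _ => 0
  | node2 _ _ _, [] => 0
  | node2 _ G₁ G₂, false :: l => lamT G₁ G₂ * ((1 - piT G₁) / valT G₁) * hide G₁ l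
  | node2 _ G₁ G₂, true :: l => lamT G₁ G₂ * ((1 - piT G₂) / valT G₂) * hide G₂ l

/-- An expanding search of `G`: an ordering of all of the vertices of `G` in which every
vertex other than the root appears after its parent (hence the root `[]` comes first). -/
def IsSearch (G : RTree) (σ : List (List Bool)) : Prop :=
  σ.Perm (verts G) ∧ ∀ a ∈ σ, a ≠ [] → σ.idxOf a.dropLast < σ.idxOf a

/-- A depth-first expanding search: for every vertex `v`, the vertices of the subtree
`G(v)` occupy consecutive positions beginning with `v`;  equivalently, any vertex `w`
appearing between `v` and a descendant of `v` is itself a descendant of `v`. -/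
def IsDFS (G : RTree) (σ : List (List Bool)) : Prop :=
  IsSearch G σ ∧ ∀ v a w, v ∈ σ → a ∈ σ → w ∈ σ → v <+: a →
    σ.idxOf v ≤ σ.idxOf w → σ.idxOf w ≤ σ.idxOf a → v <+: w

/-- `P(v,σ)`: the probability of reaching and successfully searching vertex `v`,
i.e. the product of `p` over the locations searched up to and including `v`. -/
def capProb (G : RTree) (σ : List (List Bool)) (v : List Bool) : ℝ :=
  ((σ.take (σ.idxOf v + 1)).map (pAt G)).prod

/-- `P(x,σ) = Σ_v x(v) P(v,σ)` for a distribution `x` on the vertices. -/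
def payoffD (G : RTree) (x : List Bool → ℝ) (σ : List (List Bool)) : ℝ :=
  (σ.map (fun v => x v * capProb G σ v)).sum

end RTree

/-!
Along with the claim one proves `0 < π(G) < 1`. At a branch vertex the induction hypothesis
`π(Gᵢ) ≤ V_{Gᵢ} ≤ 1` confines each weight `(1 - π(Gᵢ)) / V_{Gᵢ}` to the interval
`[1 - π(Gᵢ), (1 - π(Gᵢ)) / π(Gᵢ)]`, and at its endpoints both bounds on `λ_G (1 - π(G₁)π(G₂))`
come down to `(1 - π(G₁)) (1 - π(G₂)) ≥ 0`.
-/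

open Set

section Field

variable {𝕜 : Type*} [Field 𝕜] [LinearOrder 𝕜] [IsStrictOrderedRing 𝕜]

lemma mul_mem_Icc_mul_of_mem_Icc {p a x : 𝕜} (hp₀ : 0 ≤ p) (hp₁ : p ≤ 1) (ha : 0 ≤ a)
    (hx : x ∈ Icc a 1) : p * x ∈ Icc (p * a) 1 :=
  ⟨mul_le_mul_of_nonneg_left hx.1 hp₀, mul_le_one₀ hp₁ (ha.trans hx.1) hx.2⟩

lemma one_sub_div_mem_Icc {π V : 𝕜} (hπ : π ∈ Ioo 0 1) (hV : V ∈ Icc π 1) :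
    (1 - π) / V ∈ Icc (1 - π) ((1 - π) / π) :=
  ⟨le_div_self (by linarith [hπ.2]) (hπ.1.trans_le hV.1) hV.2,
    div_le_div_of_nonneg_left (by linarith [hπ.2]) hπ.1 hV.1⟩

lemma inv_add_mul_one_sub_mul_mem_Icc {π₁ π₂ a₁ a₂ : 𝕜} (h₁ : π₁ ∈ Ioo 0 1) (h₂ : π₂ ∈ Ioo 0 1)
    (ha₁ : a₁ ∈ Icc (1 - π₁) ((1 - π₁) / π₁)) (ha₂ : a₂ ∈ Icc (1 - π₂) ((1 - π₂) / π₂)) :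
    (a₁ + a₂)⁻¹ * (1 - π₁ * π₂) ∈ Icc (π₁ * π₂) 1 := by
  obtain ⟨hπ₁, hπ₁'⟩ := h₁
  obtain ⟨hπ₂, hπ₂'⟩ := h₂
  have hcross : 0 ≤ (1 - π₁) * (1 - π₂) := mul_nonneg (by linarith) (by linarith)
  have hsum : 0 < a₁ + a₂ := by linarith [ha₁.1, ha₂.1]
  have hupper₁ : π₁ * a₁ ≤ 1 - π₁ := (le_div_iff₀' hπ₁).1 ha₁.2
  have hupper₂ : π₂ * a₂ ≤ 1 - π₂ := (le_div_iff₀' hπ₂).1 ha₂.2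
  refine ⟨(le_inv_mul_iff₀ hsum).2 ?_, (inv_mul_le_one₀ hsum).2 ?_⟩
  · linarith [mul_le_mul_of_nonneg_left hupper₁ hπ₂.le, mul_le_mul_of_nonneg_left hupper₂ hπ₁.le]
  · linarith [ha₁.1, ha₂.1]

end Field

namespace RTree

theorem valid.piT_mem_Ioo {G : RTree} (hG : G.valid) : G.piT ∈ Ioo 0 1 := by
  induction G with
  | leaf p => exact hG
  | node1 p G' ih =>
    obtain ⟨⟨hp₀, hp₁⟩, hG'⟩ := hG
    obtain ⟨hπ₀, hπ₁⟩ := ih hG'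
    exact ⟨mul_pos hp₀ hπ₀, mul_lt_one_of_nonneg_of_lt_one_right hp₁ hπ₀.le hπ₁⟩
  | node2 p G₁ G₂ ih₁ ih₂ =>
    obtain ⟨⟨hp₀, hp₁⟩, hG₁, hG₂⟩ := hG
    obtain ⟨hπ₁₀, hπ₁₁⟩ := ih₁ hG₁
    obtain ⟨hπ₂₀, hπ₂₁⟩ := ih₂ hG₂
    have hπ : G₁.piT * G₂.piT < 1 := mul_lt_one_of_nonneg_of_lt_one_right hπ₁₁.le hπ₂₀.le hπ₂₁
    have hπ₀ : 0 < G₁.piT * G₂.piT := mul_pos hπ₁₀ hπ₂₀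
    exact ⟨mul_pos hp₀ hπ₀, mul_lt_one_of_nonneg_of_lt_one_right hp₁ hπ₀.le hπ⟩

theorem valid.valT_mem_Icc {G : RTree} (hG : G.valid) : G.valT ∈ Icc G.piT 1 := by
  induction G with
  | leaf p => exact ⟨le_rfl, hG.2.le⟩
  | node1 p G' ih =>
    obtain ⟨⟨hp₀, hp₁⟩, hG'⟩ := hG
    exact mul_mem_Icc_mul_of_mem_Icc hp₀.le hp₁ hG'.piT_mem_Ioo.1.le (ih hG')
  | node2 p G₁ G₂ ih₁ ih₂ =>
    obtain ⟨⟨hp₀, hp₁⟩, hG₁, hG₂⟩ := hG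
    rw [valT, mul_assoc]
    have hπ₁ := hG₁.piT_mem_Ioo
    have hπ₂ := hG₂.piT_mem_Ioo
    exact mul_mem_Icc_mul_of_mem_Icc hp₀.le hp₁ (mul_pos hπ₁.1 hπ₂.1).le <|
      inv_add_mul_one_sub_mul_mem_Icc hπ₁ hπ₂
        (one_sub_div_mem_Icc hπ₁ (ih₁ hG₁)) (one_sub_div_mem_Icc hπ₂ (ih₂ hG₂))

end RTree

open RTree in
/-- for every rooted tree `G`, `π(G) ≤ V_G ≤ 1`. -/
theorem value_bounds (G : RTree) (hG : G.valid) :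
    G.piT ≤ G.valT ∧ G.valT ≤ 1 :=
  hG.valT_mem_Icc
end

section
/- For every rooted tree G and every depth-first expanding search σ of G, the expected payoff against the tree hiding strategy satisfies P(h_G, σ) = V_G. -/
/-!
A depth-first search of `G` starts at the root and then searches the branches one after the
other, each one completely and depth-first. The payoff of a concatenation of searches splits as
`P(x, A ++ B) = P(x, A) + π(A) P(x, B)`, so by induction on `G` each branch `Gᵢ`, searched
against `h_G = λ (1 - π(Gᵢ)) / V_{Gᵢ} · h_{Gᵢ}`, contributes `λ (1 - π(Gᵢ))`, and in either order
`p_O λ ((1 - π₁) + π₁ (1 - π₂)) = p_O λ (1 - π₁ π₂) = V_G`.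
-/

namespace List

variable {α β : Type*}

theorem idxOf_map_of_injective [BEq α] [LawfulBEq α] [BEq β] [LawfulBEq β] {f : α → β}
    (hf : f.Injective) (l : List α) (a : α) : (l.map f).idxOf (f a) = l.idxOf a := by
  induction l with
  | nil => simp
  | cons x l ih =>
    rcases eq_or_ne x a with rfl | hxa
    · simp
    · simp [hxa, hf.ne hxa, ih]

theorem filter_append_filter_not_of_idxOf_closed [BEq α] [LawfulBEq α] (P : α → Bool)
    {l : List α} (hl : l.Nodup)
    (h : ∀ a ∈ l, P a → ∀ w ∈ l, l.idxOf w ≤ l.idxOf a → P w) :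
    l.filter P ++ l.filter (fun x => !P x) = l := by
  induction l with
  | nil => rfl
  | cons x l ih =>
    obtain ⟨hx, hl⟩ := nodup_cons.mp hl
    by_cases hPx : P x
    · have hne : ∀ y ∈ l, x ≠ y := fun y hy hxy => hx (hxy ▸ hy)
      have h' : ∀ a ∈ l, P a → ∀ w ∈ l, l.idxOf w ≤ l.idxOf a → P w := fun a ha hPa w hw hwa =>
        h a (mem_cons_of_mem x ha) hPa w (mem_cons_of_mem x hw)
          (by simpa [idxOf_cons_ne _ (hne a ha), idxOf_cons_ne _ (hne w hw)])
      simp [hPx, ih hl h']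
    · have hnone : ∀ a ∈ x :: l, P a = false := fun a ha => by
        by_contra hPa
        exact hPx (h a ha (by simpa using hPa) x mem_cons_self (by simp))
      rw [filter_eq_nil_iff.mpr (by simpa using hnone), filter_eq_self.mpr (by simpa using hnone)]
      rfl

theorem Perm.exists_eq_map {f : α → β} {g : β → α} (hgf : Function.LeftInverse g f)
    {l : List β} {V : List α} (h : l ~ V.map f) : ∃ τ, l = τ.map f ∧ τ ~ V := by
  refine ⟨l.map g, ?_, by simpa [map_map, hgf.comp_eq_id] using h.map g⟩
  conv_lhs => rw [← map_id l]
  rw [map_map]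
  refine map_congr_left fun x hx => ?_
  obtain ⟨y, -, rfl⟩ := mem_map.mp (h.subset hx)
  simp [hgf y]

end List

namespace RTree
open List

theorem nil_mem_verts (G : RTree) : [] ∈ verts G := by
  cases G <;> simp [verts]

theorem verts_nodup (G : RTree) : (verts G).Nodup := by
  induction G with
  | leaf p => simp [verts]
  | node1 p G' ih => simp [verts, ih.map cons_injective]
  | node2 p G₁ G₂ ih₁ ih₂ =>
    simp [verts, nodup_append, ih₁.map cons_injective, ih₂.map cons_injective]

theorem dropLast_mem_verts {G : RTree} {a : List Bool} (ha : a ∈ verts G) (hne : a ≠ []) :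
    a.dropLast ∈ verts G := by
  induction G generalizing a with
  | leaf p => simp_all [verts]
  | node1 p G' ih =>
    simp only [verts, mem_cons, mem_map] at ha ⊢
    obtain rfl | ⟨l, hl, rfl⟩ := ha
    · exact absurd rfl hne
    rcases eq_or_ne l [] with rfl | hl0
    · simp
    · exact .inr ⟨_, ih hl hl0, (dropLast_cons_of_ne_nil hl0).symm⟩
  | node2 p G₁ G₂ ih₁ ih₂ =>
    simp only [verts, mem_cons, mem_append, mem_map] at ha ⊢
    obtain rfl | ⟨l, hl, rfl⟩ | ⟨l, hl, rfl⟩ := ha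
    · exact absurd rfl hne
    all_goals rcases eq_or_ne l [] with rfl | hl0
    · simp
    · exact .inr (.inl ⟨_, ih₁ hl hl0, (dropLast_cons_of_ne_nil hl0).symm⟩)
    · simp
    · exact .inr (.inr ⟨_, ih₂ hl hl0, (dropLast_cons_of_ne_nil hl0).symm⟩)

theorem prod_map_pAt_verts (G : RTree) : ((verts G).map (pAt G)).prod = piT G := by
  induction G with
  | leaf p => simp [verts, pAt, piT]
  | node1 p G' ih => simp [verts, pAt, piT, Function.comp_def, ih]
  | node2 p G₁ G₂ ih₁ ih₂ => simp [verts, pAt, piT, Function.comp_def, ih₁, ih₂]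

theorem prod_map_pAt_of_perm {G : RTree} {τ : List (List Bool)} (h : τ ~ verts G) :
    (τ.map (pAt G)).prod = piT G := by
  rw [(h.map (pAt G)).prod_eq, prod_map_pAt_verts]

theorem valid.piT_mem_Ioo_s12 {G : RTree} (h : G.valid) : piT G ∈ Set.Ioo 0 1 := by
  induction G with
  | leaf p => exact h
  | node1 p G' ih =>
    obtain ⟨⟨hp0, hp1⟩, hG'⟩ := h
    obtain ⟨h0, h1⟩ := ih hG'
    exact ⟨mul_pos hp0 h0, by simp only [piT]; nlinarith⟩
  | node2 p G₁ G₂ ih₁ ih₂ =>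
    obtain ⟨⟨hp0, hp1⟩, hG₁, hG₂⟩ := h
    obtain ⟨h₁0, h₁1⟩ := ih₁ hG₁
    obtain ⟨h₂0, h₂1⟩ := ih₂ hG₂
    have : piT G₁ * piT G₂ < 1 := by nlinarith
    exact ⟨by simp only [piT]; positivity, by simp only [piT]; nlinarith⟩

theorem valid.valT_pos {G : RTree} (h : G.valid) : 0 < valT G := by
  induction G with
  | leaf p => exact h.1
  | node1 p G' ih => exact mul_pos h.1.1 (ih h.2)
  | node2 p G₁ G₂ ih₁ ih₂ =>
    obtain ⟨⟨hp0, -⟩, hG₁, hG₂⟩ := h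
    obtain ⟨h₁0, h₁1⟩ := hG₁.piT_mem_Ioo_s12
    obtain ⟨h₂0, h₂1⟩ := hG₂.piT_mem_Ioo_s12
    have hV₁ := ih₁ hG₁
    have hV₂ := ih₂ hG₂
    have h₁ : 0 < 1 - piT G₁ := by linarith
    have h₂ : 0 < 1 - piT G₂ := by linarith
    have h₁₂ : 0 < 1 - piT G₁ * piT G₂ := by nlinarith
    simp only [valT]
    positivity

section Payoff

variable {G : RTree} {x : List Bool → ℝ}

theorem payoffD_cons {a : List Bool} {σ : List (List Bool)} (h : a ∉ σ) :
    payoffD G x (a :: σ) = pAt G a * (x a + payoffD G x σ) := by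
  have hcap : ∀ v ∈ σ, x v * capProb G (a :: σ) v = pAt G a * (x v * capProb G σ v) := by
    intro v hv
    rw [capProb, capProb, idxOf_cons_ne _ (ne_of_mem_of_not_mem hv h).symm, take_succ_cons,
      map_cons, prod_cons]
    ring
  rw [payoffD, payoffD, map_cons, sum_cons, map_congr_left hcap, sum_map_mul_left]
  simp [capProb, mul_add, mul_comm]

theorem payoffD_append {A B : List (List Bool)} (h : (A ++ B).Nodup) :
    payoffD G x (A ++ B) = payoffD G x A + (A.map (pAt G)).prod * payoffD G x B := by
  induction A with
  | nil => simp [payoffD]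
  | cons a A ih =>
    rw [cons_append] at h ⊢
    obtain ⟨ha, hAB⟩ := nodup_cons.mp h
    rw [payoffD_cons ha, payoffD_cons (fun h => ha (mem_append_left B h)), ih hAB, map_cons,
      prod_cons]
    ring

theorem payoffD_map_cons {G' : RTree} {b : Bool} (hp : ∀ l, pAt G (b :: l) = pAt G' l)
    {τ : List (List Bool)} (hτ : τ.Nodup) :
    payoffD G x (τ.map (cons b)) = payoffD G' (fun l => x (b :: l)) τ := by
  induction τ with
  | nil => rfl
  | cons a τ ih =>
    obtain ⟨ha, hτ⟩ := nodup_cons.mp hτ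
    rw [map_cons, payoffD_cons (by simpa using ha), payoffD_cons ha, ih hτ, hp]

theorem payoffD_const_mul (c : ℝ) (σ : List (List Bool)) :
    payoffD G (fun v => c * x v) σ = c * payoffD G x σ := by
  simp [payoffD, ← sum_map_mul_left, mul_assoc]

end Payoff

section Search

variable {G : RTree} {σ : List (List Bool)}

theorem IsSearch.nodup (h : IsSearch G σ) : σ.Nodup :=
  h.1.nodup_iff.mpr (verts_nodup G)

theorem IsSearch.exists_eq_nil_cons (h : IsSearch G σ) : ∃ σ', σ = [] :: σ' := by
  obtain _ | ⟨v, σ'⟩ := σ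
  · simpa using h.1.mem_iff.mpr (nil_mem_verts G)
  refine ⟨σ', ?_⟩
  by_contra hv
  have := h.2 v mem_cons_self (by simpa using hv)
  simp at this

theorem IsSearch.eq_singleton_of_second {v : List Bool} {ρ : List (List Bool)}
    (h : IsSearch G ([] :: v :: ρ)) (hv : v ≠ []) : ∃ b, v = [b] := by
  have hlt := h.2 v (by simp) hv
  rw [idxOf_cons_ne _ (Ne.symm hv), idxOf_cons_self] at hlt
  have hdl : v.dropLast = [] := by
    by_contra hne
    rw [idxOf_cons_ne _ (Ne.symm hne)] at hlt
    omega
  obtain _ | ⟨b, _ | ⟨c, l⟩⟩ := v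
  · exact absurd rfl hv
  · exact ⟨b, rfl⟩
  · simp at hdl

theorem IsDFS.of_eq_append_map_cons {Gb : RTree} {b : Bool} {pre τ post : List (List Bool)}
    (hd : IsDFS G σ) (hσ : σ = pre ++ τ.map (cons b) ++ post) (hτ : τ ~ verts Gb)
    (hpre : ∀ l, b :: l ∉ pre) : IsDFS Gb τ := by
  have hmem : ∀ v ∈ τ, b :: v ∈ σ := fun v hv => by simp [hσ, hv]
  have hidx : ∀ v ∈ τ, σ.idxOf (b :: v) = pre.length + τ.idxOf v := fun v hv => by
    rw [hσ, append_assoc, idxOf_append_of_notMem (hpre v),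
      idxOf_append_of_mem (mem_map_of_mem hv), idxOf_map_of_injective cons_injective]
  refine ⟨⟨hτ, fun a ha hne => ?_⟩, fun v a w hv ha hw hva hvw hwa => ?_⟩
  · have hpar := hd.1.2 (b :: a) (hmem a ha) (cons_ne_nil _ _)
    rw [dropLast_cons_of_ne_nil hne, hidx _ ha,
      hidx _ (hτ.mem_iff.mpr (dropLast_mem_verts (hτ.subset ha) hne))] at hpar
    omega
  · have := hd.2 (b :: v) (b :: a) (b :: w) (hmem v hv) (hmem a ha) (hmem w hw)
      (cons_prefix_cons.mpr ⟨rfl, hva⟩) (by rw [hidx v hv, hidx w hw]; omega)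
      (by rw [hidx w hw, hidx a ha]; omega)
    exact (cons_prefix_cons.mp this).2

theorem IsDFS.eq_map_cons_append_map_cons {b : Bool} {ρ V W : List (List Bool)}
    (hd : IsDFS G ([] :: [b] :: ρ)) (hσ : [b] :: ρ ~ V.map (cons b) ++ W.map (cons !b)) :
    ∃ τV τW, [b] :: ρ = τV.map (cons b) ++ τW.map (cons !b) ∧ τV ~ V ∧ τW ~ W := by
  set σ' := [b] :: ρ
  set P : List Bool → Bool := fun v => v.head? == some b
  obtain ⟨hnil, hnd⟩ := nodup_cons.mp hd.1.nodup
  have hidx : ∀ w ∈ σ', ([] :: σ').idxOf w = σ'.idxOf w + 1 := fun w hw =>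
    idxOf_cons_ne _ (ne_of_mem_of_not_mem hw hnil).symm
  -- depth-first: the subtree `G([b])` is searched in one block right after the root
  have hblock : σ'.filter P ++ σ'.filter (fun v => !P v) = σ' := by
    refine filter_append_filter_not_of_idxOf_closed P hnd fun a ha hPa w hw hwa => ?_
    have hba : [b] <+: a := ⟨a.tail, cons_head?_tail (by simpa [P] using hPa)⟩
    have hb : [b] ∈ σ' := mem_cons_self
    obtain ⟨t, rfl⟩ := hd.2 [b] a w (mem_cons_of_mem _ hb) (mem_cons_of_mem _ ha)
      (mem_cons_of_mem _ hw) hba (by rw [hidx _ hw, hidx _ hb, idxOf_cons_self]; omega)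
      (by rw [hidx _ hw, hidx _ ha]; omega)
    simp [P]
  have hV : σ'.filter P ~ V.map (cons b) := by
    simpa [P, filter_append, filter_map, Function.comp_def] using hσ.filter P
  have hW : σ'.filter (fun v => !P v) ~ W.map (cons !b) := by
    simpa [P, filter_append, filter_map, Function.comp_def] using hσ.filter (fun v => !P v)
  obtain ⟨τV, hτV, hV⟩ := hV.exists_eq_map (g := tail) fun _ => rfl
  obtain ⟨τW, hτW, hW⟩ := hW.exists_eq_map (g := tail) fun _ => rfl
  exact ⟨τV, τW, by rw [← hτV, ← hτW, hblock], hV, hW⟩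

theorem IsDFS.exists_of_node1 {p : ℝ} {G' : RTree}
    (hd : IsDFS (node1 p G') σ) : ∃ τ, σ = [] :: τ.map (cons false) ∧ IsDFS G' τ := by
  obtain ⟨σ', rfl⟩ := hd.1.exists_eq_nil_cons
  obtain ⟨τ, rfl, hτ⟩ := hd.1.1.cons_inv.exists_eq_map (g := tail) fun _ => rfl
  exact ⟨τ, rfl, hd.of_eq_append_map_cons (pre := [[]]) (b := false) (post := []) (by simp) hτ
    (by simp)⟩

theorem IsDFS.exists_of_node2 {p : ℝ} {G₁ G₂ : RTree}
    (hd : IsDFS (node2 p G₁ G₂) σ) :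
    ∃ τ₁ τ₂, IsDFS G₁ τ₁ ∧ IsDFS G₂ τ₂ ∧
      (σ = [] :: (τ₁.map (cons false) ++ τ₂.map (cons true)) ∨
       σ = [] :: (τ₂.map (cons true) ++ τ₁.map (cons false))) := by
  obtain ⟨σ', rfl⟩ := hd.1.exists_eq_nil_cons
  have hperm : σ' ~ (verts G₁).map (cons false) ++ (verts G₂).map (cons true) :=
    hd.1.1.cons_inv
  obtain _ | ⟨v, ρ⟩ := σ'
  · exact absurd (hperm.symm.subset (mem_append_left _ (mem_map_of_mem (nil_mem_verts G₁))))
      not_mem_nil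
  have hv : v ≠ [] := fun e => (nodup_cons.mp hd.1.nodup).1 (e ▸ mem_cons_self)
  obtain ⟨_ | _, rfl⟩ := hd.1.eq_singleton_of_second hv
  · obtain ⟨τ₁, τ₂, hσ, h₁, h₂⟩ := hd.eq_map_cons_append_map_cons hperm
    rw [hσ, Bool.not_false] at hd ⊢
    exact ⟨τ₁, τ₂, hd.of_eq_append_map_cons (pre := [[]]) rfl h₁ (by simp),
      hd.of_eq_append_map_cons (pre := [] :: τ₁.map (cons false)) (b := true) (post := [])
        (by simp) h₂ (by simp), .inl rfl⟩
  · obtain ⟨τ₂, τ₁, hσ, h₂, h₁⟩ :=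
      hd.eq_map_cons_append_map_cons (hperm.trans perm_append_comm)
    rw [hσ, Bool.not_true] at hd ⊢
    exact ⟨τ₁, τ₂,
      hd.of_eq_append_map_cons (pre := [] :: τ₂.map (cons true)) (b := false) (post := [])
        (by simp) h₁ (by simp),
      hd.of_eq_append_map_cons (pre := [[]]) rfl h₂ (by simp), .inr rfl⟩

end Search

theorem payoffD_hide_node1 {p : ℝ} {G' : RTree} {τ : List (List Bool)} (hτ : τ.Nodup) :
    payoffD (node1 p G') (hide (node1 p G')) ([] :: τ.map (cons false)) =
      p * payoffD G' (hide G') τ := by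
  rw [payoffD_cons (by simp), payoffD_map_cons (G' := G') (fun _ => rfl) hτ]
  simp only [pAt, hide, zero_add]

theorem payoffD_hide_node2 {p : ℝ} {G₁ G₂ : RTree} (hV₁ : valT G₁ ≠ 0) (hV₂ : valT G₂ ≠ 0)
    {τ₁ τ₂ σ : List (List Bool)} (h₁ : τ₁ ~ verts G₁) (h₂ : τ₂ ~ verts G₂) (hnd : σ.Nodup)
    (hval₁ : payoffD G₁ (hide G₁) τ₁ = valT G₁) (hval₂ : payoffD G₂ (hide G₂) τ₂ = valT G₂)
    (hσ : σ = [] :: (τ₁.map (cons false) ++ τ₂.map (cons true)) ∨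
      σ = [] :: (τ₂.map (cons true) ++ τ₁.map (cons false))) :
    payoffD (node2 p G₁ G₂) (hide (node2 p G₁ G₂)) σ = valT (node2 p G₁ G₂) := by
  set G := node2 p G₁ G₂
  have branch₁ : payoffD G (hide G) (τ₁.map (cons false)) = lamT G₁ G₂ * (1 - piT G₁) := by
    rw [payoffD_map_cons (G' := G₁) (fun _ => rfl) (h₁.nodup_iff.mpr (verts_nodup G₁))]
    simp only [G, hide]
    rw [payoffD_const_mul, hval₁]
    field_simp
  have branch₂ : payoffD G (hide G) (τ₂.map (cons true)) = lamT G₁ G₂ * (1 - piT G₂) := by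
    rw [payoffD_map_cons (G' := G₂) (fun _ => rfl) (h₂.nodup_iff.mpr (verts_nodup G₂))]
    simp only [G, hide]
    rw [payoffD_const_mul, hval₂]
    field_simp
  have prod₁ : ((τ₁.map (cons false)).map (pAt G)).prod = piT G₁ := by
    rw [map_map]; exact prod_map_pAt_of_perm h₁
  have prod₂ : ((τ₂.map (cons true)).map (pAt G)).prod = piT G₂ := by
    rw [map_map]; exact prod_map_pAt_of_perm h₂
  rcases hσ with rfl | rfl
  all_goals
    obtain ⟨hroot, hnd⟩ := nodup_cons.mp hnd
    rw [payoffD_cons hroot, payoffD_append hnd, branch₁, branch₂]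
    simp only [prod₁, prod₂, G, pAt, hide, valT, lamT]
    ring

end RTree

open RTree in
/-- against the tree hiding strategy `h_G`, every depth-first expanding
search `σ` of `G` has expected payoff `P(h_G,σ) = V_G`. -/
theorem dfs_payoff_eq_value (G : RTree) (hG : G.valid)
    (σ : List (List Bool)) (hσ : IsDFS G σ) :
    payoffD G (hide G) σ = G.valT := by
  induction G generalizing σ with
  | leaf p =>
    obtain rfl : σ = [[]] := by simpa [verts] using hσ.1.1
    simp [payoffD, capProb, hide, pAt, valT]
  | node1 p G' ih =>
    obtain ⟨τ, rfl, hτ⟩ := hσ.exists_of_node1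
    rw [payoffD_hide_node1 hτ.1.nodup, ih hG.2 τ hτ]
    rfl
  | node2 p G₁ G₂ ih₁ ih₂ =>
    obtain ⟨-, hG₁, hG₂⟩ := hG
    obtain ⟨τ₁, τ₂, h₁, h₂, hσ'⟩ := hσ.exists_of_node2
    exact payoffD_hide_node2 hG₁.valT_pos.ne' hG₂.valT_pos.ne' h₁.1.1 h₂.1.1 hσ.1.nodup
      (ih₁ hG₁ τ₁ h₁) (ih₂ hG₂ τ₂ h₂) hσ'
end

section
/- Let G be a rooted tree whose root has two branches G₁ and G₂. Then q_{G₁} = λ_G(1/V_{G₁} − π(G₂)/V_{G₂}) and q_{G₂} = λ_G(1/V_{G₂} − π(G₁)/V_{G₁}) satisfy q_{G₁} ≥ 0, q_{G₂} ≥ 0, and q_{G₁} + q_{G₂} = 1; that is, they are well-defined probabilities. -/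
/-! By induction on the tree, every valid `G` satisfies `0 < π(G) < 1` and `π(G) ≤ V_G ≤ 1`.
Hence `π(G₂)/V_{G₂} ≤ 1 ≤ 1/V_{G₁}`, so both `q`'s are nonnegative, and their sum is
`λ_G (1/V_{G₁} - π(G₁)/V_{G₁} + 1/V_{G₂} - π(G₂)/V_{G₂}) = λ_G λ_G⁻¹ = 1`. -/

structure ValueBounds (π V : ℝ) : Prop where
  pi_pos : 0 < π
  pi_lt_one : π < 1
  pi_le : π ≤ V
  le_one : V ≤ 1

namespace ValueBounds

variable {π V π₁ V₁ π₂ V₂ : ℝ}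

theorem val_pos (h : ValueBounds π V) : 0 < V := h.pi_pos.trans_le h.pi_le

theorem weight_pos (h : ValueBounds π V) : 0 < (1 - π) / V :=
  div_pos (sub_pos.mpr h.pi_lt_one) h.val_pos

theorem one_sub_le_weight (h : ValueBounds π V) : 1 - π ≤ (1 - π) / V :=
  le_div_self (sub_nonneg.mpr h.pi_lt_one.le) h.val_pos h.le_one

theorem mul_weight_le_one_sub (h : ValueBounds π V) : π * ((1 - π) / V) ≤ 1 - π := by
  have hle : (1 - π) / V ≤ (1 - π) / π :=
    div_le_div_of_nonneg_left (sub_nonneg.mpr h.pi_lt_one.le) h.pi_pos h.pi_le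
  calc π * ((1 - π) / V) ≤ π * ((1 - π) / π) := mul_le_mul_of_nonneg_left hle h.pi_pos.le
    _ = 1 - π := mul_div_cancel₀ _ h.pi_pos.ne'

theorem div_le_one_div (h₁ : ValueBounds π₁ V₁) (h₂ : ValueBounds π₂ V₂) :
    π₂ / V₂ ≤ 1 / V₁ :=
  (div_le_one_of_le₀ h₂.pi_le h₂.val_pos.le).trans (one_le_one_div h₁.val_pos h₁.le_one)

theorem leaf {p : ℝ} (hp0 : 0 < p) (hp1 : p < 1) : ValueBounds p p :=
  ⟨hp0, hp1, le_rfl, hp1.le⟩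

theorem mul_left {p : ℝ} (hp0 : 0 < p) (hp1 : p ≤ 1) (h : ValueBounds π V) :
    ValueBounds (p * π) (p * V) where
  pi_pos := mul_pos hp0 h.pi_pos
  pi_lt_one := by nlinarith [h.pi_pos, h.pi_lt_one]
  pi_le := mul_le_mul_of_nonneg_left h.pi_le hp0.le
  le_one := mul_le_one₀ hp1 h.val_pos.le h.le_one

/-- With weights `A = (1 - π₁)/V₁` and `B = (1 - π₂)/V₂`, the bounds `1 - πᵢ ≤ Aᵢ` and
`πᵢ Aᵢ ≤ 1 - πᵢ` reduce both inequalities to `(1 - π₁)(1 - π₂) ≥ 0`. -/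
theorem join (h₁ : ValueBounds π₁ V₁) (h₂ : ValueBounds π₂ V₂) :
    ValueBounds (π₁ * π₂) (((1 - π₁) / V₁ + (1 - π₂) / V₂)⁻¹ * (1 - π₁ * π₂)) := by
  set A := (1 - π₁) / V₁
  set B := (1 - π₂) / V₂
  have hS : 0 < A + B := add_pos h₁.weight_pos h₂.weight_pos
  have hcross : 0 ≤ (1 - π₁) * (1 - π₂) :=
    mul_nonneg (sub_nonneg.mpr h₁.pi_lt_one.le) (sub_nonneg.mpr h₂.pi_lt_one.le)
  refine ⟨mul_pos h₁.pi_pos h₂.pi_pos,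
    mul_lt_one_of_nonneg_of_lt_one_left h₁.pi_pos.le h₁.pi_lt_one h₂.pi_lt_one.le, ?_, ?_⟩
  · rw [le_inv_mul_iff₀ hS]
    have hA := mul_le_mul_of_nonneg_left h₁.mul_weight_le_one_sub h₂.pi_pos.le
    have hB := mul_le_mul_of_nonneg_left h₂.mul_weight_le_one_sub h₁.pi_pos.le
    nlinarith
  · rw [inv_mul_le_one₀ hS]
    nlinarith [h₁.one_sub_le_weight, h₂.one_sub_le_weight]

end ValueBounds

namespace RTree

theorem valid.valueBounds {G : RTree} (h : G.valid) : ValueBounds (piT G) (valT G) := by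
  induction G with
  | leaf p => exact ValueBounds.leaf h.1 h.2
  | node1 p G' ih => exact (ih h.2).mul_left h.1.1 h.1.2
  | node2 p G₁ G₂ ih₁ ih₂ =>
    rw [piT, valT, mul_assoc p]
    exact ((ih₁ h.2.1).join (ih₂ h.2.2)).mul_left h.1.1 h.1.2

end RTree

open RTree in
/-- at a root with two branches `G₁` and `G₂`, the quantities
`q_{G₁} = λ_G(1/V_{G₁} − π(G₂)/V_{G₂})` and `q_{G₂} = λ_G(1/V_{G₂} − π(G₁)/V_{G₁})`
are well-defined probabilities: both are nonnegative and they sum to `1`. -/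
theorem branch_probabilities_well_defined
    (p : ℝ) (G₁ G₂ : RTree) (hG : (RTree.node2 p G₁ G₂).valid) :
    0 ≤ lamT G₁ G₂ * (1 / valT G₁ - piT G₂ / valT G₂) ∧
    0 ≤ lamT G₁ G₂ * (1 / valT G₂ - piT G₁ / valT G₁) ∧
    lamT G₁ G₂ * (1 / valT G₁ - piT G₂ / valT G₂) +
      lamT G₁ G₂ * (1 / valT G₂ - piT G₁ / valT G₁) = 1 := by
  have h₁ := hG.2.1.valueBounds
  have h₂ := hG.2.2.valueBounds
  have hS : 0 < (1 - piT G₁) / valT G₁ + (1 - piT G₂) / valT G₂ :=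
    add_pos h₁.weight_pos h₂.weight_pos
  have hlam : 0 ≤ lamT G₁ G₂ := (inv_pos.mpr hS).le
  refine ⟨mul_nonneg hlam (sub_nonneg.mpr (h₁.div_le_one_div h₂)),
    mul_nonneg hlam (sub_nonneg.mpr (h₂.div_le_one_div h₁)), ?_⟩
  calc lamT G₁ G₂ * (1 / valT G₁ - piT G₂ / valT G₂) +
        lamT G₁ G₂ * (1 / valT G₂ - piT G₁ / valT G₁)
      = lamT G₁ G₂ * ((1 - piT G₁) / valT G₁ + (1 - piT G₂) / valT G₂) := by ring
    _ = 1 := inv_mul_cancel₀ hS.ne'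
end
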